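/- arXiv:1602.00300 — 14 statements merged into one kernel-verified Lean document; each statement's English description precedes it below -/
import Mathlib

section
/- Let X and Y be abelian groups equipped with translation-invariant metrics, and suppose X is unbounded (i.e., the induced norm ‖x‖ = d(x,0) is unbounded). Let ε ≥ 0 and f : X → Y. Suppose that for every η > ε there exists r > 0 such that for all x, y ∈ X with ‖x‖ ≥ r and ‖y‖ ≥ r we have ‖f(x+y) − f(x) − f(y)‖ < η. Then for all x, y ∈ X, ‖f(x+y) − f(x) − f(y)‖ ≤ 5ε. -/
/-- Asymptotic stability of the Cauchy equation: metric abelian groups,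
translation-invariant metrics, norm `‖x‖ = dist x 0`. -/
theorem cauchy_asymptotic_stability
    {X Y : Type*} [AddCommGroup X] [AddCommGroup Y]
    [MetricSpace X] [MetricSpace Y]
    (hdX : ∀ x y z : X, dist (x + z) (y + z) = dist x y)
    (hdY : ∀ x y z : Y, dist (x + z) (y + z) = dist x y)
    (hub : ∀ M : ℝ, ∃ x : X, M < dist x 0)
    (ε : ℝ) (hε : 0 ≤ ε) (f : X → Y)
    (hf : ∀ η : ℝ, ε < η → ∃ r : ℝ, 0 < r ∧ ∀ x y : X,
      r ≤ dist x 0 → r ≤ dist y 0 → dist (f (x + y)) (f x + f y) < η) :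
    ∀ x y : X, dist (f (x + y)) (f x + f y) ≤ 5 * ε := by
  have hX_neg : ∀ a : X, dist (-a) 0 = dist a 0 := by
    intro a
    have h := hdX (-a) 0 a
    simpa [dist_comm] using h.symm
  have hX_lower : ∀ a b : X, dist b 0 - dist a 0 ≤ dist (a + b) 0 := by
    intro a b
    have h1 : dist (a + b) b = dist a 0 := by
      have := hdX a 0 b
      simpa using this
    have h2 := dist_triangle b (a + b) 0
    rw [dist_comm b (a + b), h1] at h2
    linarith
  have hY : ∀ a b c : Y, dist (c + a) (c + b) = dist a b := by
    intro a b c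
    have := hdY a b c
    simpa [add_comm] using this
  intro x y
  by_contra hcon
  push_neg at hcon
  set d := dist (f (x + y)) (f x + f y) with hd
  set η := ε + (d - 5 * ε) / 10 with hη
  have hεη : ε < η := by
    have : 5 * ε < d := hcon
    rw [hη]; linarith
  obtain ⟨r, hr, H⟩ := hf η hεη
  obtain ⟨w, hw⟩ := hub (r + dist y 0)
  obtain ⟨z, hz⟩ := hub (r + dist x 0 + dist y 0 + dist w 0)
  have nx : (0:ℝ) ≤ dist x 0 := dist_nonneg
  have ny : (0:ℝ) ≤ dist y 0 := dist_nonneg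
  have nw : (0:ℝ) ≤ dist w 0 := dist_nonneg
  have cz : r ≤ dist z 0 := by linarith
  have cw : r ≤ dist w 0 := by linarith
  have hxz : r ≤ dist (x - z) 0 := by
    have h := hX_lower x (-z)
    rw [hX_neg] at h
    have e : x + -z = x - z := (sub_eq_add_neg x z).symm
    rw [e] at h
    linarith
  have hyz : r ≤ dist (y + z) 0 := by
    have h := hX_lower y z
    linarith
  have hyw : r ≤ dist (y - w) 0 := by
    have h := hX_lower y (-w)
    rw [hX_neg] at h
    have e : y + -w = y - w := (sub_eq_add_neg y w).symm
    rw [e] at h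
    linarith
  have hzw : r ≤ dist (z + w) 0 := by
    have h := hX_lower w z
    rw [add_comm z w]
    linarith
  have T1 : dist (f (x + y)) (f (x - z) + f (y + z)) < η := by
    have h := H (x - z) (y + z) hxz hyz
    have e : (x - z) + (y + z) = x + y := by abel
    rwa [e] at h
  have T2 : dist (f (y + z)) (f (y - w) + f (z + w)) < η := by
    have h := H (y - w) (z + w) hyw hzw
    have e : (y - w) + (z + w) = y + z := by abel
    rwa [e] at h
  have T3 : dist (f (z + w)) (f z + f w) < η := H z w cz cw
  have T4 : dist (f x) (f (x - z) + f z) < η := by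
    have h := H (x - z) z hxz cz
    have e : (x - z) + z = x := by abel
    rwa [e] at h
  have T5 : dist (f y) (f (y - w) + f w) < η := by
    have h := H (y - w) w hyw cw
    have e : (y - w) + w = y := by abel
    rwa [e] at h
  -- telescoping chain in Y
  set A1 := f (x - z) + f (y + z) with hA1
  set A2 := f (x - z) + (f (y - w) + f (z + w)) with hA2
  set A3 := f (x - z) + (f (y - w) + (f z + f w)) with hA3
  set A4 := f x + (f (y - w) + f w) with hA4
  have d12 : dist A1 A2 = dist (f (y + z)) (f (y - w) + f (z + w)) := hY _ _ _
  have d23 : dist A2 A3 = dist (f (z + w)) (f z + f w) := by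
    rw [hA2, hA3, hY, hY]
  have e34 : A3 = (f (x - z) + f z) + (f (y - w) + f w) := by rw [hA3]; abel
  have d34 : dist A3 A4 = dist (f (x - z) + f z) (f x) := by
    rw [e34, hA4, hdY]
  have d45 : dist A4 (f x + f y) = dist (f (y - w) + f w) (f y) := hY _ _ _
  have chain : d ≤ dist (f (x + y)) A1 + dist A1 A2 + dist A2 A3 +
      dist A3 A4 + dist A4 (f x + f y) := by
    calc d ≤ dist (f (x + y)) A4 + dist A4 (f x + f y) := dist_triangle _ _ _
      _ ≤ (dist (f (x + y)) A3 + dist A3 A4) + dist A4 (f x + f y) := by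
          have := dist_triangle (f (x + y)) A3 A4; linarith
      _ ≤ ((dist (f (x + y)) A2 + dist A2 A3) + dist A3 A4) + dist A4 (f x + f y) := by
          have := dist_triangle (f (x + y)) A2 A3; linarith
      _ ≤ (((dist (f (x + y)) A1 + dist A1 A2) + dist A2 A3) + dist A3 A4) +
            dist A4 (f x + f y) := by
          have := dist_triangle (f (x + y)) A1 A2; linarith
      _ = _ := by ring
  rw [d12, d23, d34, d45] at chain
  rw [dist_comm (f (x - z) + f z) (f x)] at chain
  rw [dist_comm (f (y - w) + f w) (f y)] at chain
  have : d < 5 * η := by linarith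
  rw [hη] at this
  have hdd : 5 * ε < d := hcon
  linarith
end

section
/- Let X be an abelian group with a translation-invariant metric whose induced norm is unbounded, let ε > 0, and let x₀ ∈ X with x₀ ≠ 0 and 2x₀ ≠ x₀. Define f : X → ℝ by f(x) = 3ε if x = x₀ and f(x) = ε otherwise. Then: (a) for all x, y with ‖x‖ > ‖x₀‖ and ‖y‖ > ‖x₀‖, |f(x+y) − f(x) − f(y)| ≤ ε; and (b) sup over x, y ∈ X of |f(x+y) − f(x) − f(y)| ≥ 5ε. Hence the constant 5ε in the asymptotic stability theorem for the Cauchy equation is sharp. -/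
open scoped Classical

/-- Sharpness of the constant `5ε` in the asymptotic stability theorem
for the Cauchy equation. -/
theorem cauchy_stability_sharp
    {X : Type*} [AddCommGroup X] [MetricSpace X]
    (hdX : ∀ x y z : X, dist (x + z) (y + z) = dist x y)
    (hub : ∀ M : ℝ, ∃ x : X, M < dist x 0)
    (ε : ℝ) (hε : 0 < ε) (x₀ : X) (hx₀ : x₀ ≠ 0) (hx₀2 : x₀ + x₀ ≠ x₀)
    (f : X → ℝ) (hfdef : ∀ x : X, f x = if x = x₀ then 3 * ε else ε) :
    (∀ x y : X, dist x₀ 0 < dist x 0 → dist x₀ 0 < dist y 0 →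
      |f (x + y) - f x - f y| ≤ ε) ∧
    (∃ x y : X, 5 * ε ≤ |f (x + y) - f x - f y|) := by
  constructor
  · intro x y hx hy
    have hxne : x ≠ x₀ := by rintro rfl; exact lt_irrefl _ hx
    have hyne : y ≠ x₀ := by rintro rfl; exact lt_irrefl _ hy
    rw [hfdef x, hfdef y, hfdef (x + y), if_neg hxne, if_neg hyne]
    by_cases h : x + y = x₀
    · rw [if_pos h, abs_le]; constructor <;> linarith
    · rw [if_neg h, abs_le]; constructor <;> linarith
  · refine ⟨x₀, x₀, ?_⟩
    rw [hfdef x₀, hfdef (x₀ + x₀), if_pos rfl, if_neg hx₀2]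
    rw [abs_of_nonpos (by linarith)]; linarith
end

section
/- Let X and Y be abelian groups equipped with translation-invariant metrics, with X uniquely 2-divisible and unbounded. Let ε ≥ 0 and f : X → Y. Suppose that for every η > ε there exists r > 0 such that for all x, y ∈ X with ‖x‖ ≥ r and ‖y‖ ≥ r we have ‖2·f((x+y)/2) − f(x) − f(y)‖ < η. Then for all x, y ∈ X, ‖4·f((x+y)/2) − 2·f(x) − 2·f(y)‖ ≤ 4ε. -/
/-- Asymptotic stability of the Jensen equation. `h` is the (unique) halving map
on the uniquely 2-divisible group `X`. -/
theorem jensen_asymptotic_stability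
    {X Y : Type*} [AddCommGroup X] [AddCommGroup Y]
    [MetricSpace X] [MetricSpace Y]
    (hdX : ∀ x y z : X, dist (x + z) (y + z) = dist x y)
    (hdY : ∀ x y z : Y, dist (x + z) (y + z) = dist x y)
    (h : X → X) (hh : ∀ x : X, h x + h x = x)
    (hhu : ∀ x z : X, z + z = x → z = h x)
    (hub : ∀ M : ℝ, ∃ x : X, M < dist x 0)
    (ε : ℝ) (hε : 0 ≤ ε) (f : X → Y)
    (hf : ∀ η : ℝ, ε < η → ∃ r : ℝ, 0 < r ∧ ∀ x y : X,
      r ≤ dist x 0 → r ≤ dist y 0 →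
      dist ((2 : ℤ) • f (h (x + y))) (f x + f y) < η) :
    ∀ x y : X, dist ((4 : ℤ) • f (h (x + y))) ((2 : ℤ) • f x + (2 : ℤ) • f y) ≤ 4 * ε := by
  -- norms
  have nX_neg : ∀ a : X, dist (-a) 0 = dist a 0 := by
    intro a
    have h1 := hdX (-a) 0 a
    simp only [neg_add_cancel, zero_add] at h1
    rw [← h1, dist_comm]
  have nX_lower : ∀ a z : X, dist z 0 - dist a 0 ≤ dist (a + z) 0 := by
    intro a z
    have h1 : dist z 0 ≤ dist z (-a) + dist (-a) 0 := dist_triangle _ _ _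
    have h2 : dist z (-a) = dist (a + z) 0 := by
      have := hdX z (-a) a
      simpa [add_comm] using this.symm
    rw [h2, nX_neg] at h1
    linarith
  have distY_eq : ∀ a b : Y, dist a b = dist (a - b) 0 := by
    intro a b
    have := hdY (a - b) 0 b
    simpa using this
  have nY_add : ∀ a b : Y, dist (a + b) 0 ≤ dist a 0 + dist b 0 := by
    intro a b
    have h1 : dist (a + b) 0 ≤ dist (a + b) b + dist b 0 := dist_triangle _ _ _
    have h2 : dist (a + b) b = dist a 0 := by
      have := hdY a 0 b
      simpa using this
    linarith [h2 ▸ h1]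
  have nY_sub : ∀ a b : Y, dist (a - b) 0 ≤ dist a 0 + dist b 0 := by
    intro a b
    have h1 := nY_add a (-b)
    have h2 : dist (-b) 0 = dist b 0 := by
      have h3 := hdY (-b) 0 b
      simp only [neg_add_cancel, zero_add] at h3
      rw [← h3, dist_comm]
    rw [h2] at h1
    simpa [sub_eq_add_neg] using h1
  intro x y
  -- reduce to bound 4 * η for every η > ε
  have main : ∀ η : ℝ, ε < η →
      dist ((4 : ℤ) • f (h (x + y))) ((2 : ℤ) • f x + (2 : ℤ) • f y) ≤ 4 * η := by
    intro η hη
    obtain ⟨r, hr, hfr⟩ := hf η hη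
    obtain ⟨z, hz⟩ := hub (r + dist x 0 + dist y 0)
    have hx0 : 0 ≤ dist x 0 := dist_nonneg
    have hy0 : 0 ≤ dist y 0 := dist_nonneg
    have hxz : r ≤ dist (x + z) 0 := by linarith [nX_lower x z]
    have hyz : r ≤ dist (y + z) 0 := by linarith [nX_lower y z]
    have hxz' : r ≤ dist (x + -z) 0 := by
      have := nX_lower x (-z)
      rw [nX_neg] at this
      linarith
    have hyz' : r ≤ dist (y + -z) 0 := by
      have := nX_lower y (-z)
      rw [nX_neg] at this
      linarith
    set J := f (h (x + y)) with hJ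
    set u := f (x + z) with hu
    set v := f (x + -z) with hv
    set s := f (y + z) with hs
    set t := f (y + -z) with ht
    -- A : pair (x+z, x+-z)
    have hA : dist ((2 : ℤ) • f x) (u + v) < η := by
      have := hfr (x + z) (x + -z) hxz hxz'
      have hsum : (x + z) + (x + -z) = x + x := by abel
      rw [hsum, ← hhu (x + x) x rfl] at this
      exact this
    have hB : dist ((2 : ℤ) • f y) (s + t) < η := by
      have := hfr (y + z) (y + -z) hyz hyz'
      have hsum : (y + z) + (y + -z) = y + y := by abel
      rw [hsum, ← hhu (y + y) y rfl] at this
      exact this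
    have hC : dist ((2 : ℤ) • J) (u + t) < η := by
      have := hfr (x + z) (y + -z) hxz hyz'
      have hsum : (x + z) + (y + -z) = x + y := by abel
      rw [hsum] at this
      exact this
    have hD : dist ((2 : ℤ) • J) (s + v) < η := by
      have := hfr (y + z) (x + -z) hyz hxz'
      have hsum : (y + z) + (x + -z) = x + y := by abel
      rw [hsum] at this
      exact this
    have key : (4 : ℤ) • J - ((2 : ℤ) • f x + (2 : ℤ) • f y)
        = (((2 : ℤ) • J - (u + t)) + ((2 : ℤ) • J - (s + v))
          - ((2 : ℤ) • f x - (u + v))) - ((2 : ℤ) • f y - (s + t)) := by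
      abel
    rw [distY_eq, key]
    have hA' : dist ((2 : ℤ) • f x - (u + v)) 0 < η := by rw [← distY_eq]; exact hA
    have hB' : dist ((2 : ℤ) • f y - (s + t)) 0 < η := by rw [← distY_eq]; exact hB
    have hC' : dist ((2 : ℤ) • J - (u + t)) 0 < η := by rw [← distY_eq]; exact hC
    have hD' : dist ((2 : ℤ) • J - (s + v)) 0 < η := by rw [← distY_eq]; exact hD
    calc dist ((((2 : ℤ) • J - (u + t)) + ((2 : ℤ) • J - (s + v))
          - ((2 : ℤ) • f x - (u + v))) - ((2 : ℤ) • f y - (s + t))) 0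
        ≤ dist (((2 : ℤ) • J - (u + t)) + ((2 : ℤ) • J - (s + v))
          - ((2 : ℤ) • f x - (u + v))) 0 + dist ((2 : ℤ) • f y - (s + t)) 0 :=
          nY_sub _ _
      _ ≤ dist (((2 : ℤ) • J - (u + t)) + ((2 : ℤ) • J - (s + v))) 0
          + dist ((2 : ℤ) • f x - (u + v)) 0 + dist ((2 : ℤ) • f y - (s + t)) 0 := by
          linarith [nY_sub (((2 : ℤ) • J - (u + t)) + ((2 : ℤ) • J - (s + v)))
            ((2 : ℤ) • f x - (u + v))]
      _ ≤ dist ((2 : ℤ) • J - (u + t)) 0 + dist ((2 : ℤ) • J - (s + v)) 0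
          + dist ((2 : ℤ) • f x - (u + v)) 0 + dist ((2 : ℤ) • f y - (s + t)) 0 := by
          linarith [nY_add ((2 : ℤ) • J - (u + t)) ((2 : ℤ) • J - (s + v))]
      _ ≤ 4 * η := by linarith
  -- pass to the limit η → ε
  refine le_of_forall_pos_le_add ?_
  intro δ hδ
  have := main (ε + δ / 4) (by linarith)
  linarith
end

section
/- Let X and Y be abelian groups with translation-invariant metrics, X unbounded. If f : X → Y satisfies: for every η > 0 there exists r > 0 such that ‖f(x+y) − f(x) − f(y)‖ < η whenever ‖x‖ ≥ r and ‖y‖ ≥ r, then f is additive, i.e., f(x+y) = f(x) + f(y) for all x, y ∈ X. -/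
/-- Asymptotic hyperstability of the Cauchy equation (case `ε = 0`). -/
theorem cauchy_asymptotic_hyperstability
    {X Y : Type*} [AddCommGroup X] [AddCommGroup Y]
    [MetricSpace X] [MetricSpace Y]
    (hdX : ∀ x y z : X, dist (x + z) (y + z) = dist x y)
    (hdY : ∀ x y z : Y, dist (x + z) (y + z) = dist x y)
    (hub : ∀ M : ℝ, ∃ x : X, M < dist x 0)
    (f : X → Y)
    (hf : ∀ η : ℝ, 0 < η → ∃ r : ℝ, 0 < r ∧ ∀ x y : X,
      r ≤ dist x 0 → r ≤ dist y 0 → dist (f (x + y)) (f x + f y) < η) :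
    ∀ x y : X, f (x + y) = f x + f y := by
  -- reverse triangle-type inequality in X
  have hX1 : ∀ a b : X, dist b 0 ≤ dist (a + b) 0 + dist a 0 := by
    intro a b
    have h1 : dist b (-a) = dist (a + b) 0 := by
      have := hdX b (-a) a
      simpa [add_comm, neg_add_cancel] using this.symm
    have h2 : dist (-a : X) 0 = dist a 0 := by
      have := hdX (-a) 0 a
      simpa [neg_add_cancel, dist_comm] using this.symm
    calc dist b 0 ≤ dist b (-a) + dist (-a) 0 := dist_triangle _ _ _
      _ = dist (a + b) 0 + dist a 0 := by rw [h1, h2]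
  -- translation invariance in Y, left version
  have hY : ∀ a b c : Y, dist (c + a) (c + b) = dist a b := by
    intro a b c
    have := hdY a b c
    simpa [add_comm] using this
  -- Step 1: approximate additivity when only the second argument is large
  have P : ∀ η : ℝ, 0 < η → ∃ r : ℝ, 0 < r ∧ ∀ x z : X,
      r ≤ dist z 0 → dist (f (x + z)) (f x + f z) < η := by
    intro η hη
    obtain ⟨r, hr, H⟩ := hf (η / 3) (by linarith)
    refine ⟨r, hr, fun x z hz => ?_⟩
    obtain ⟨w, hw⟩ := hub (r + dist x 0 + dist z 0)
    have hw0 : r ≤ dist w 0 := by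
      have := dist_nonneg (x := x) (y := (0 : X))
      have := dist_nonneg (x := z) (y := (0 : X))
      linarith
    have hxw : r ≤ dist (x - w) 0 := by
      have := hX1 x (-w)
      have h2 : dist (-w : X) 0 = dist w 0 := by
        have := hdX (-w) 0 w
        simpa [neg_add_cancel, dist_comm] using this.symm
      have hxnw : x + -w = x - w := by abel
      rw [hxnw, h2] at this
      have := dist_nonneg (x := z) (y := (0 : X))
      linarith
    have hwz : r ≤ dist (w + z) 0 := by
      have := hX1 z w  -- dist w 0 ≤ dist (z + w) 0 + dist z 0
      have hcomm : z + w = w + z := add_comm _ _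
      rw [hcomm] at this
      have hx0 := dist_nonneg (x := x) (y := (0 : X))
      linarith
    -- f(x+z) = f((x-w)+(w+z)); x = (x-w)+w
    have e1 : dist (f (x + z)) (f (x - w) + f (w + z)) < η / 3 := by
      have := H (x - w) (w + z) hxw hwz
      have he : x - w + (w + z) = x + z := by abel
      rwa [he] at this
    have e2 : dist (f (x - w) + f (w + z)) (f (x - w) + (f w + f z)) < η / 3 := by
      have := H w z hw0 hz
      rw [hY]
      exact this
    have e3 : dist (f (x - w) + (f w + f z)) (f x + f z) < η / 3 := by
      have := H (x - w) w hxw hw0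
      have he : x - w + w = x := by abel
      rw [he] at this
      have : dist (f (x - w) + f w) (f x) < η / 3 := by
        rwa [dist_comm] at this
      calc dist (f (x - w) + (f w + f z)) (f x + f z)
          = dist (f (x - w) + f w + f z) (f x + f z) := by rw [add_assoc]
        _ = dist (f (x - w) + f w) (f x) := hdY _ _ _
        _ < η / 3 := this
    calc dist (f (x + z)) (f x + f z)
        ≤ dist (f (x + z)) (f (x - w) + f (w + z)) +
            dist (f (x - w) + f (w + z)) (f (x - w) + (f w + f z)) +
            dist (f (x - w) + (f w + f z)) (f x + f z) := dist_triangle4 _ _ _ _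
      _ < η / 3 + η / 3 + η / 3 := by linarith
      _ = η := by ring
  -- Step 2: exact additivity
  intro x y
  have key : ∀ η : ℝ, 0 < η → dist (f (x + y)) (f x + f y) < η := by
    intro η hη
    obtain ⟨r, hr, H⟩ := P (η / 3) (by linarith)
    obtain ⟨z, hz⟩ := hub (r + dist y 0)
    have hz0 : r ≤ dist z 0 := by
      have := dist_nonneg (x := y) (y := (0 : X))
      linarith
    have hyz : r ≤ dist (y + z) 0 := by
      have := hX1 y z
      linarith
    have e1 : dist (f (x + y) + f z) (f (x + y + z)) < η / 3 := by
      have := H (x + y) z hz0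
      rwa [dist_comm] at this
    have e2 : dist (f (x + y + z)) (f x + f (y + z)) < η / 3 := by
      have := H x (y + z) hyz
      have he : x + (y + z) = x + y + z := by abel
      rwa [he] at this
    have e3 : dist (f x + f (y + z)) (f x + (f y + f z)) < η / 3 := by
      rw [hY]; exact H y z hz0
    have main : dist (f (x + y) + f z) (f x + (f y + f z)) < η :=
      calc dist (f (x + y) + f z) (f x + (f y + f z))
          ≤ dist (f (x + y) + f z) (f (x + y + z)) +
            dist (f (x + y + z)) (f x + f (y + z)) +
            dist (f x + f (y + z)) (f x + (f y + f z)) := dist_triangle4 _ _ _ _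
        _ < η / 3 + η / 3 + η / 3 := by linarith
        _ = η := by ring
    calc dist (f (x + y)) (f x + f y)
        = dist (f (x + y) + f z) (f x + f y + f z) := (hdY _ _ _).symm
      _ = dist (f (x + y) + f z) (f x + (f y + f z)) := by rw [add_assoc]
      _ < η := main
  have h0 : dist (f (x + y)) (f x + f y) = 0 := by
    by_contra h
    have hp : 0 < dist (f (x + y)) (f x + f y) :=
      lt_of_le_of_ne dist_nonneg (Ne.symm h)
    exact lt_irrefl _ (key _ hp)
  exact dist_eq_zero.mp h0
end

section
/- Let X and Y be abelian groups with translation-invariant metrics, X uniquely 2-divisible and unbounded. If f : X → Y satisfies: for every η > 0 there exists r > 0 such that ‖2f((x+y)/2) − f(x) − f(y)‖ < η whenever ‖x‖ ≥ r and ‖y‖ ≥ r, then 4·f((x+y)/2) = 2·f(x) + 2·f(y) for all x, y ∈ X. -/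
section aux

variable {Y : Type*} [AddCommGroup Y] [MetricSpace Y]

theorem jensen_aux_nd (hdY : ∀ x y z : Y, dist (x + z) (y + z) = dist x y)
    (a b : Y) : dist a b = dist (a - b) 0 := by
  have := hdY (a - b) 0 b
  simpa using this

theorem jensen_aux_add (hdY : ∀ x y z : Y, dist (x + z) (y + z) = dist x y)
    (p q : Y) : dist (p + q) 0 ≤ dist p 0 + dist q 0 := by
  calc dist (p + q) 0 ≤ dist (p + q) q + dist q 0 := dist_triangle _ _ _
    _ = dist p 0 + dist q 0 := by rw [show dist (p+q) q = dist p 0 from by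
        simpa using hdY p 0 q]

theorem jensen_aux_neg (hdY : ∀ x y z : Y, dist (x + z) (y + z) = dist x y)
    (p : Y) : dist (-p) 0 = dist p 0 := by
  have := hdY (-p) 0 p
  simp at this
  rw [← this, dist_comm]

end aux

/-- Asymptotic hyperstability for the Jensen equation (case `ε = 0`).
`h` is the halving map on the uniquely 2-divisible group `X`. -/
theorem jensen_asymptotic_hyperstability
    {X Y : Type*} [AddCommGroup X] [AddCommGroup Y]
    [MetricSpace X] [MetricSpace Y]
    (hdX : ∀ x y z : X, dist (x + z) (y + z) = dist x y)
    (hdY : ∀ x y z : Y, dist (x + z) (y + z) = dist x y)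
    (h : X → X) (hh : ∀ x : X, h x + h x = x)
    (hhu : ∀ x z : X, z + z = x → z = h x)
    (hub : ∀ M : ℝ, ∃ x : X, M < dist x 0)
    (f : X → Y)
    (hf : ∀ η : ℝ, 0 < η → ∃ r : ℝ, 0 < r ∧ ∀ x y : X,
      r ≤ dist x 0 → r ≤ dist y 0 →
      dist ((2 : ℤ) • f (h (x + y))) (f x + f y) < η) :
    ∀ x y : X, (4 : ℤ) • f (h (x + y)) = (2 : ℤ) • f x + (2 : ℤ) • f y := by
  intro x y
  set u := h (x + y) with hu
  -- it suffices that the distance is less than every positive η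
  have key : ∀ η : ℝ, 0 < η →
      dist ((4 : ℤ) • f u) ((2 : ℤ) • f x + (2 : ℤ) • f y) < η := by
    intro η hη
    obtain ⟨r, hr, hR⟩ := hf (η / 4) (by linarith)
    obtain ⟨w, hw⟩ := hub (r + dist x 0 + dist y 0)
    -- norms of the shifted points are large
    have hshift : ∀ a : X, dist w 0 - dist a 0 ≤ dist (a + w) 0 := by
      intro a
      have h1 : dist (a + w) w = dist a 0 := by simpa using hdX a 0 w
      have := dist_triangle w (a + w) (0 : X)
      rw [dist_comm w (a + w), h1] at this
      linarith
    have hshift' : ∀ a : X, dist w 0 - dist a 0 ≤ dist (a - w) 0 := by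
      intro a
      have h1 : dist (a - w) 0 = dist a w := by
        have h2 := hdX (a - w) 0 w; simp at h2; exact h2.symm
      have := dist_triangle a w 0
      rw [dist_comm w 0] at this
      have := dist_triangle w a 0
      rw [h1, dist_comm a w]
      linarith
    have hxn : (0:ℝ) ≤ dist x 0 := dist_nonneg
    have hyn : (0:ℝ) ≤ dist y 0 := dist_nonneg
    have hxw : r ≤ dist (x + w) 0 := by have := hshift x; linarith
    have hxw' : r ≤ dist (x - w) 0 := by have := hshift' x; linarith
    have hyw : r ≤ dist (y + w) 0 := by have := hshift y; linarith
    have hyw' : r ≤ dist (y - w) 0 := by have := hshift' y; linarith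
    -- the four Jensen differences
    have e1 : h ((x + w) + (y - w)) = u := by rw [hu]; congr 1; abel
    have e2 : h ((x - w) + (y + w)) = u := by rw [hu]; congr 1; abel
    have e3 : h ((x + w) + (x - w)) = x := (hhu _ x (by abel)).symm
    have e4 : h ((y + w) + (y - w)) = y := (hhu _ y (by abel)).symm
    have D1 := hR (x + w) (y - w) hxw hyw'
    have D2 := hR (x - w) (y + w) hxw' hyw
    have D3 := hR (x + w) (x - w) hxw hxw'
    have D4 := hR (y + w) (y - w) hyw hyw'
    rw [e1] at D1; rw [e2] at D2; rw [e3] at D3; rw [e4] at D4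
    set g1 : Y := (2 : ℤ) • f u - (f (x + w) + f (y - w)) with hg1
    set g2 : Y := (2 : ℤ) • f u - (f (x - w) + f (y + w)) with hg2
    set g3 : Y := (2 : ℤ) • f x - (f (x + w) + f (x - w)) with hg3
    set g4 : Y := (2 : ℤ) • f y - (f (y + w) + f (y - w)) with hg4
    have d1 : dist g1 0 < η / 4 := by rw [hg1, ← jensen_aux_nd hdY]; exact D1
    have d2 : dist g2 0 < η / 4 := by rw [hg2, ← jensen_aux_nd hdY]; exact D2
    have d3 : dist g3 0 < η / 4 := by rw [hg3, ← jensen_aux_nd hdY]; exact D3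
    have d4 : dist g4 0 < η / 4 := by rw [hg4, ← jensen_aux_nd hdY]; exact D4
    have decomp : (4 : ℤ) • f u - ((2 : ℤ) • f x + (2 : ℤ) • f y)
        = g1 + g2 + -g3 + -g4 := by
      rw [hg1, hg2, hg3, hg4]; abel
    calc dist ((4 : ℤ) • f u) ((2 : ℤ) • f x + (2 : ℤ) • f y)
        = dist (g1 + g2 + -g3 + -g4) 0 := by
          rw [jensen_aux_nd hdY, decomp]
      _ ≤ dist (g1 + g2 + -g3) 0 + dist (-g4) 0 := jensen_aux_add hdY _ _
      _ ≤ dist (g1 + g2) 0 + dist (-g3) 0 + dist (-g4) 0 := by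
          have := jensen_aux_add hdY (g1 + g2) (-g3); linarith
      _ ≤ dist g1 0 + dist g2 0 + dist (-g3) 0 + dist (-g4) 0 := by
          have := jensen_aux_add hdY g1 g2; linarith
      _ = dist g1 0 + dist g2 0 + dist g3 0 + dist g4 0 := by
          rw [jensen_aux_neg hdY, jensen_aux_neg hdY]
      _ < η := by linarith
  have hz : dist ((4 : ℤ) • f u) ((2 : ℤ) • f x + (2 : ℤ) • f y) ≤ 0 := by
    by_contra hc
    push_neg at hc
    exact absurd (key _ hc) (lt_irrefl _)
  exact dist_le_zero.mp hz
end

section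
/- Let X and Y be abelian groups with translation-invariant metrics such that the subgroup 2X = {2x : x ∈ X} is unbounded (i.e., sup over x of ‖2x‖ = ∞). Let φ : [0,∞) → ℝ with φ(t) → ∞ as t → ∞. Suppose f : X → Y satisfies: there exist r > 0 and K > 0 such that for all x, y ∈ X with ‖x‖ ≥ r and ‖y‖ ≥ r, φ(‖x − y‖) · ‖f(x+y) − f(x) − f(y)‖ < K. Then f(x+y) = f(x) + f(y) for all x, y ∈ X. -/
section Aux

variable {G : Type*} [AddCommGroup G] [MetricSpace G]

/-- In a metric group with right-invariant distance, `dist a b = ‖a - b‖`. -/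
lemma inv_dist_sub (hd : ∀ x y z : G, dist (x + z) (y + z) = dist x y) (a b : G) :
    dist a b = dist (a - b) 0 := by
  have h := hd (a - b) 0 b
  simpa using h

/-- The norm is even. -/
lemma inv_norm_neg (hd : ∀ x y z : G, dist (x + z) (y + z) = dist x y) (a : G) :
    dist (-a) 0 = dist a 0 := by
  have h := hd (-a) 0 a
  simpa [dist_comm] using h.symm

/-- Subadditivity of the norm. -/
lemma inv_norm_add (hd : ∀ x y z : G, dist (x + z) (y + z) = dist x y) (a b : G) :
    dist (a + b) 0 ≤ dist a 0 + dist b 0 := by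
  calc dist (a + b) 0 ≤ dist (a + b) b + dist b 0 := dist_triangle _ _ _
    _ = dist a 0 + dist b 0 := by
        have h := hd a 0 b
        rw [zero_add] at h
        rw [h]

/-- Reverse triangle: `‖x‖ - ‖y‖ ≤ ‖x - y‖`. -/
lemma inv_norm_sub_ge (hd : ∀ x y z : G, dist (x + z) (y + z) = dist x y) (x y : G) :
    dist x 0 - dist y 0 ≤ dist (x - y) 0 := by
  have h : dist x 0 ≤ dist (x - y) 0 + dist y 0 := by
    have h2 := inv_norm_add hd (x - y) y
    simpa using h2
  linarith

end Aux

/-- Hyperstability of the Cauchy equation with a weight `φ` tending to infinity,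
assuming `2X` is unbounded. -/
theorem cauchy_hyperstability
    {X Y : Type*} [AddCommGroup X] [AddCommGroup Y]
    [MetricSpace X] [MetricSpace Y]
    (hdX : ∀ x y z : X, dist (x + z) (y + z) = dist x y)
    (hdY : ∀ x y z : Y, dist (x + z) (y + z) = dist x y)
    (hub2 : ∀ M : ℝ, ∃ x : X, M < dist (x + x) 0)
    (φ : ℝ → ℝ) (hφ : Filter.Tendsto φ Filter.atTop Filter.atTop)
    (f : X → Y)
    (hf : ∃ r : ℝ, 0 < r ∧ ∃ K : ℝ, 0 < K ∧ ∀ x y : X,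
      r ≤ dist x 0 → r ≤ dist y 0 →
      φ (dist x y) * dist (f (x + y)) (f x + f y) < K) :
    ∀ x y : X, f (x + y) = f x + f y := by
  obtain ⟨r, hr, K, hK, hP⟩ := hf
  -- Step 1: `f` is additive on pairs of elements of norm at least `r`.
  have step1 : ∀ u v : X, r ≤ dist u 0 → r ≤ dist v 0 → f (u + v) = f u + f v := by
    intro u v hu hv
    have key : ∀ ε : ℝ, 0 < ε → dist (f (u + v)) (f u + f v) ≤ 3 * ε := by
      intro ε hε
      obtain ⟨T0, hT0⟩ := Filter.eventually_atTop.mp (hφ.eventually_ge_atTop (K / ε))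
      set T := max T0 0 with hTdef
      have hTnn : 0 ≤ T := le_max_right _ _
      obtain ⟨z, hz⟩ := hub2 (2 * (dist u 0 + dist v 0 + T + r))
      have hz2 : dist (z + z) 0 ≤ dist z 0 + dist z 0 := inv_norm_add hdX z z
      have hzn : dist u 0 + dist v 0 + T + r < dist z 0 := by linarith
      have hun : 0 ≤ dist u 0 := dist_nonneg
      have hvn : 0 ≤ dist v 0 := dist_nonneg
      -- quantitative consequence of the hypothesis
      have P' : ∀ a b : X, r ≤ dist a 0 → r ≤ dist b 0 → T ≤ dist a b →
          dist (f (a + b)) (f a + f b) ≤ ε := by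
        intro a b ha hb hab
        have h1 : K / ε ≤ φ (dist a b) := hT0 _ (le_trans (le_max_left _ _) hab)
        have h2 := hP a b ha hb
        have hφpos : 0 < φ (dist a b) := lt_of_lt_of_le (div_pos hK hε) h1
        have h1' : K ≤ φ (dist a b) * ε := by
          rwa [div_le_iff₀ hε] at h1
        exact le_of_lt (lt_of_mul_lt_mul_left (lt_of_lt_of_le h2 h1') hφpos.le)
      -- norms of the shifted points
      have hxz : dist z 0 - dist u 0 ≤ dist (u + z) 0 := by
        have h := inv_norm_sub_ge hdX z (-u)
        rw [inv_norm_neg hdX, sub_neg_eq_add, add_comm] at h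
        exact h
      have hyz : dist z 0 - dist v 0 ≤ dist (v - z) 0 := by
        have h := inv_norm_sub_ge hdX z v
        rw [show (z : X) - v = -(v - z) by abel, inv_norm_neg hdX] at h
        exact h
      have hzr : r ≤ dist z 0 := by linarith
      -- the three estimates
      have A1 : dist (f ((u + z) + (v - z))) (f (u + z) + f (v - z)) ≤ ε := by
        apply P' (u + z) (v - z) (by linarith) (by linarith)
        rw [inv_dist_sub hdX]
        have h := inv_norm_sub_ge hdX (z + z) (-(u - v))
        rw [inv_norm_neg hdX, show (z + z : X) - -(u - v) = (u + z) - (v - z) by abel] at h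
        have huv : dist (u - v) 0 ≤ dist u 0 + dist v 0 := by
          have h2 := inv_norm_add hdX u (-v)
          rw [inv_norm_neg hdX, ← sub_eq_add_neg] at h2
          exact h2
        linarith
      have A2 : dist (f (u + z)) (f u + f z) ≤ ε := by
        apply P' u z hu hzr
        rw [inv_dist_sub hdX]
        have h := inv_norm_sub_ge hdX z u
        rw [show (z : X) - u = -(u - z) by abel, inv_norm_neg hdX] at h
        linarith
      have A3 : dist (f ((v - z) + z)) (f (v - z) + f z) ≤ ε := by
        apply P' (v - z) z (by linarith) hzr
        rw [inv_dist_sub hdX]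
        have h := inv_norm_sub_ge hdX (z + z) v
        rw [show (z + z : X) - v = -((v - z) - z) by abel, inv_norm_neg hdX] at h
        linarith
      -- combine via the cocycle identity in Y
      rw [show (u + z) + (v - z) = u + v by abel] at A1
      rw [show (v - z) + z = v by abel] at A3
      have hww : f (u + v) - (f u + f v) =
          (f (u + v) - (f (u + z) + f (v - z))) +
          ((f (u + z) - (f u + f z)) + -(f v - (f (v - z) + f z))) := by abel
      have e1 : dist (f (u + v) - (f (u + z) + f (v - z))) 0 ≤ ε := by
        rw [← inv_dist_sub hdY]; exact A1
      have e2 : dist (f (u + z) - (f u + f z)) 0 ≤ ε := by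
        rw [← inv_dist_sub hdY]; exact A2
      have e3 : dist (-(f v - (f (v - z) + f z))) 0 ≤ ε := by
        rw [inv_norm_neg hdY, ← inv_dist_sub hdY]; exact A3
      calc dist (f (u + v)) (f u + f v) = dist (f (u + v) - (f u + f v)) 0 :=
            inv_dist_sub hdY _ _
        _ ≤ dist (f (u + v) - (f (u + z) + f (v - z))) 0 +
            dist ((f (u + z) - (f u + f z)) + -(f v - (f (v - z) + f z))) 0 := by
            rw [hww]; exact inv_norm_add hdY _ _
        _ ≤ dist (f (u + v) - (f (u + z) + f (v - z))) 0 +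
            (dist (f (u + z) - (f u + f z)) 0 + dist (-(f v - (f (v - z) + f z))) 0) := by
            have := inv_norm_add hdY (f (u + z) - (f u + f z)) (-(f v - (f (v - z) + f z)))
            linarith
        _ ≤ 3 * ε := by linarith
    have hd0 : dist (f (u + v)) (f u + f v) = 0 := by
      by_contra hne
      have hpos : 0 < dist (f (u + v)) (f u + f v) :=
        lt_of_le_of_ne dist_nonneg (Ne.symm hne)
      have := key (dist (f (u + v)) (f u + f v) / 4) (by linarith)
      linarith
    exact dist_eq_zero.mp hd0
  -- a single large auxiliary element is enough for the extension
  -- Step 2: f 0 = 0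
  have hf0 : f 0 = 0 := by
    obtain ⟨z, hz⟩ := hub2 (2 * r)
    have hz2 : dist (z + z) 0 ≤ dist z 0 + dist z 0 := inv_norm_add hdX z z
    have hzr : r ≤ dist z 0 := by linarith
    have hzzr : r ≤ dist (z + z) 0 := by linarith
    have hnzr : r ≤ dist (-z) 0 := by rw [inv_norm_neg hdX]; exact hzr
    have hnzzr : r ≤ dist (-(z + z)) 0 := by rw [inv_norm_neg hdX]; exact hzzr
    have e1 := step1 z z hzr hzr
    have e2 := step1 (-z) (-z) hnzr hnzr
    have e3 := step1 (z + z) (-(z + z)) hzzr hnzzr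
    have e4 := step1 z (-z) hzr hnzr
    rw [add_neg_cancel] at e3 e4
    rw [show (-z : X) + -z = -(z + z) by abel] at e2
    rw [e1, e2] at e3
    have : f 0 + 0 = f 0 + f 0 := by
      rw [add_zero]
      calc f 0 = f z + f z + (f (-z) + f (-z)) := e3
        _ = (f z + f (-z)) + (f z + f (-z)) := by abel
        _ = f 0 + f 0 := by rw [← e4]
    exact (add_left_cancel this).symm
  -- Step 3: general case
  intro x y
  obtain ⟨z, hz⟩ := hub2 (2 * (r + dist x 0 + dist y 0))
  have hz2 : dist (z + z) 0 ≤ dist z 0 + dist z 0 := inv_norm_add hdX z z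
  have hzn : r + dist x 0 + dist y 0 < dist z 0 := by linarith
  have hxn : 0 ≤ dist x 0 := dist_nonneg
  have hyn : 0 ≤ dist y 0 := dist_nonneg
  have hzr : r ≤ dist z 0 := by linarith
  have hnzr : r ≤ dist (-z) 0 := by rw [inv_norm_neg hdX]; exact hzr
  have hxz : r ≤ dist (x + z) 0 := by
    have h := inv_norm_sub_ge hdX z (-x)
    rw [inv_norm_neg hdX, sub_neg_eq_add, add_comm] at h
    linarith
  have hyz : r ≤ dist (y - z) 0 := by
    have h := inv_norm_sub_ge hdX z y
    rw [show (z : X) - y = -(y - z) by abel, inv_norm_neg hdX] at h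
    linarith
  have a1 := step1 (x + z) (y - z) hxz hyz
  have b1 := step1 (x + z) (-z) hxz hnzr
  have c1 := step1 (y - z) z hyz hzr
  have d1 := step1 z (-z) hzr hnzr
  rw [show (x + z) + (y - z) = x + y by abel] at a1
  rw [show (x + z) + -z = x by abel] at b1
  rw [show (y - z) + z = y by abel] at c1
  rw [add_neg_cancel, hf0] at d1
  rw [a1, b1, c1]
  calc f (x + z) + f (y - z) = (f (x + z) + f (-z)) + (f (y - z) + f z) - (f z + f (-z)) := by
        abel
    _ = f (x + z) + f (-z) + (f (y - z) + f z) := by rw [← d1, sub_zero]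
end

section
/- Let X be an abelian group with a translation-invariant metric such that K := sup over x ∈ X of ‖2x‖ is finite, and fix a ∈ X with a ≠ 0. Define f : X → X by f(0) = a and f(x) = x for x ≠ 0. Then for all x, y ∈ X with x ≠ 0 and y ≠ 0, ‖x − y‖ · ‖f(x+y) − f(x) − f(y)‖ ≤ K · ‖a‖, yet f is not additive. Hence the hypothesis that 2X be unbounded cannot be omitted from the hyperstability theorem for the Cauchy equation. -/
open scoped Classical

/-!
Off the line `x + y = 0` the function `f` agrees with the identity on `x`, `y` and `x + y`, so
the Cauchy difference vanishes. On that line the difference is `a`, while the weight is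
`dist x (-x) = ‖2x‖ ≤ K` by translation invariance. Additivity fails already at `x = y = 0`,
where it would force `a = a + a`.
-/

section TranslationInvariant

variable {X : Type*} [AddCommGroup X] [MetricSpace X]

lemma dist_neg_right_eq_dist_add_self (hdX : ∀ x y z : X, dist (x + z) (y + z) = dist x y)
    (x : X) : dist x (-x) = dist (x + x) 0 := by
  simpa using (hdX x (-x) x).symm

end TranslationInvariant

section IdentityOffZero

variable {X : Type*} [AddCommGroup X] {a : X} {f : X → X}

lemma map_add_of_add_ne_zero (hf : ∀ x, f x = if x = 0 then a else x) {x y : X}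
    (hx : x ≠ 0) (hy : y ≠ 0) (hxy : x + y ≠ 0) : f (x + y) = f x + f y := by
  rw [hf, hf x, hf y, if_neg hx, if_neg hy, if_neg hxy]

lemma map_add_eq_of_add_eq_zero (hf : ∀ x, f x = if x = 0 then a else x) {x y : X}
    (hx : x ≠ 0) (hy : y ≠ 0) (hxy : x + y = 0) : f (x + y) = a ∧ f x + f y = 0 := by
  rw [hf, hf x, hf y, if_pos hxy, if_neg hx, if_neg hy]
  exact ⟨rfl, hxy⟩

lemma not_additive_of_ne_zero (hf : ∀ x, f x = if x = 0 then a else x) (ha : a ≠ 0) :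
    ¬ ∀ x y, f (x + y) = f x + f y := by
  intro hadd
  have h := hadd 0 0
  rw [add_zero, hf 0, if_pos rfl] at h
  exact ha (left_eq_add.mp h)

end IdentityOffZero

/-- The unboundedness of `2X` cannot be omitted from the hyperstability theorem:
if `‖2x‖ ≤ K` for all `x`, the indicated `f` satisfies the weighted estimate
with `φ(t) = t` but is not additive. -/
theorem cauchy_hyperstability_counterexample
    {X : Type*} [AddCommGroup X] [MetricSpace X]
    (hdX : ∀ x y z : X, dist (x + z) (y + z) = dist x y)
    (K : ℝ) (hK : ∀ x : X, dist (x + x) 0 ≤ K)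
    (a : X) (ha : a ≠ 0)
    (f : X → X) (hfdef : ∀ x : X, f x = if x = 0 then a else x) :
    (∀ x y : X, x ≠ 0 → y ≠ 0 →
      dist x y * dist (f (x + y)) (f x + f y) ≤ K * dist a 0) ∧
    ¬ (∀ x y : X, f (x + y) = f x + f y) := by
  refine ⟨fun x y hx hy => ?_, not_additive_of_ne_zero hfdef ha⟩
  by_cases hxy : x + y = 0
  · obtain ⟨hsum, hparts⟩ := map_add_eq_of_add_eq_zero hfdef hx hy hxy
    rw [hsum, hparts, eq_neg_of_add_eq_zero_right hxy, dist_neg_right_eq_dist_add_self hdX]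
    exact mul_le_mul_of_nonneg_right (hK x) dist_nonneg
  · have hK0 : 0 ≤ K := dist_nonneg.trans (hK 0)
    rw [map_add_of_add_ne_zero hfdef hx hy hxy, dist_self, mul_zero]
    exact mul_nonneg hK0 dist_nonneg
end

section
/- Let X and Y be abelian groups with translation-invariant metrics, X uniquely 2-divisible, and such that 2X is unbounded. Let φ : [0,∞) → ℝ with φ(t) → ∞ as t → ∞. Suppose f : X → Y satisfies: there exist r > 0 and K > 0 such that for all x, y ∈ X with ‖x‖ ≥ r and ‖y‖ ≥ r, φ(‖x − y‖) · ‖2f((x+y)/2) − f(x) − f(y)‖ < K. Then 4·f((x+y)/2) = 2·f(x) + 2·f(y) for all x, y ∈ X. -/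
/-- Hyperstability of the Jensen equation with a weight `φ` tending to infinity,
for `X` uniquely 2-divisible with `2X` unbounded. `h` is the halving map. -/
theorem jensen_hyperstability
    {X Y : Type*} [AddCommGroup X] [AddCommGroup Y]
    [MetricSpace X] [MetricSpace Y]
    (hdX : ∀ x y z : X, dist (x + z) (y + z) = dist x y)
    (hdY : ∀ x y z : Y, dist (x + z) (y + z) = dist x y)
    (h : X → X) (hh : ∀ x : X, h x + h x = x)
    (hhu : ∀ x z : X, z + z = x → z = h x)
    (hub2 : ∀ M : ℝ, ∃ x : X, M < dist (x + x) 0)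
    (φ : ℝ → ℝ) (hφ : Filter.Tendsto φ Filter.atTop Filter.atTop)
    (f : X → Y)
    (hf : ∃ r : ℝ, 0 < r ∧ ∃ K : ℝ, 0 < K ∧ ∀ x y : X,
      r ≤ dist x 0 → r ≤ dist y 0 →
      φ (dist x y) * dist ((2 : ℤ) • f (h (x + y))) (f x + f y) < K) :
    ∀ x y : X, (4 : ℤ) • f (h (x + y)) = (2 : ℤ) • f x + (2 : ℤ) • f y := by
  obtain ⟨r, hr, K, hK, hJ⟩ := hf
  -- helpers in X
  have dsub : ∀ a b : X, dist a b = dist (a - b) 0 := by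
    intro a b
    have := hdX (a - b) 0 b
    simpa using this
  have ntri : ∀ a b : X, dist (a + b) 0 ≤ dist a 0 + dist b 0 := by
    intro a b
    have h1 : dist (a + b) b = dist a 0 := by
      have := hdX a 0 b; simpa using this
    calc dist (a + b) 0 ≤ dist (a + b) b + dist b 0 := dist_triangle _ _ _
      _ = dist a 0 + dist b 0 := by rw [h1]
  have nneg : ∀ a : X, dist (-a) 0 = dist a 0 := by
    intro a
    have := hdX (-a) 0 a
    simpa [dist_comm] using this.symm
  have rev : ∀ a b : X, dist a 0 ≤ dist (a + b) 0 + dist b 0 := by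
    intro a b
    have h1 : dist (a + b + -b) 0 ≤ dist (a + b) 0 + dist (-b) 0 := ntri _ _
    simpa [nneg] using h1
  -- helper in Y
  have daddY : ∀ u v u' v' : Y, dist (u + v) (u' + v') ≤ dist u u' + dist v v' := by
    intro u v u' v'
    calc dist (u + v) (u' + v')
        ≤ dist (u + v) (u' + v) + dist (u' + v) (u' + v') := dist_triangle _ _ _
      _ = dist u u' + dist v v' := by
          rw [hdY u u' v, add_comm u' v, add_comm u' v', hdY v v' u']
  intro x y
  set F := f (h (x + y)) with hF
  have key : ∀ ε : ℝ, 0 < ε →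
      dist ((4 : ℤ) • F) ((2 : ℤ) • f x + (2 : ℤ) • f y) ≤ 4 * ε := by
    intro ε hε
    obtain ⟨D, hD⟩ := Filter.eventually_atTop.mp (Filter.tendsto_atTop.mp hφ (K / ε))
    obtain ⟨z, hz⟩ := hub2 (max (D + dist x y) (2 * (r + (dist x 0 + dist y 0))))
    set N := dist (z + z) 0 with hN
    have hmax1 : D + dist x y < N := lt_of_le_of_lt (le_max_left _ _) hz
    have hmax2 : 2 * (r + (dist x 0 + dist y 0)) < N := lt_of_le_of_lt (le_max_right _ _) hz
    have hzn : r + (dist x 0 + dist y 0) < dist z 0 := by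
      have h1 : dist (z + z) z = dist z 0 := by
        have := hdX z 0 z; simpa using this
      have h2 := dist_triangle (z + z) z 0
      rw [h1] at h2
      linarith
    -- norms of a ± z for a ∈ {x, y}
    have hbig : ∀ a : X, dist a 0 ≤ dist x 0 + dist y 0 →
        r ≤ dist (a + z) 0 ∧ r ≤ dist (a - z) 0 := by
      intro a ha
      constructor
      · have h1 : dist z 0 ≤ dist (z + a) 0 + dist a 0 := rev z a
        rw [show z + a = a + z from add_comm z a] at h1
        linarith
      · have h1 : dist (-z) 0 ≤ dist (-z + a) 0 + dist a 0 := rev (-z) a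
        rw [nneg, show -z + a = a - z from by abel] at h1
        linarith
    have hxz := hbig x (by have := dist_nonneg (x := y) (y := (0 : X)); linarith)
    have hyz := hbig y (by have := dist_nonneg (x := x) (y := (0 : X)); linarith)
    -- distance lower bounds for the four pairs
    have dD1 : D ≤ dist (x + z) (y - z) := by
      have e : dist (x + z) (y - z) = dist ((z + z) + (x - y)) 0 := by
        rw [dsub]; congr 1; abel
      have h1 : N ≤ dist ((z + z) + (x - y)) 0 + dist (x - y) 0 := rev (z + z) (x - y)
      rw [← dsub x y] at h1
      rw [e]; linarith
    have dD2 : D ≤ dist (x - z) (y + z) := by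
      have e : dist (x - z) (y + z) = dist (-(z + z) + (x - y)) 0 := by
        rw [dsub]; congr 1; abel
      have h1 : dist (-(z + z)) 0 ≤ dist (-(z + z) + (x - y)) 0 + dist (x - y) 0 :=
        rev (-(z + z)) (x - y)
      rw [nneg, ← dsub x y] at h1
      rw [e]; linarith
    have dD3 : D ≤ dist (x + z) (x - z) := by
      have e : dist (x + z) (x - z) = N := by
        rw [dsub]; congr 1; abel
      have := dist_nonneg (x := x) (y := y)
      rw [e]; linarith
    have dD4 : D ≤ dist (y + z) (y - z) := by
      have e : dist (y + z) (y - z) = N := by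
        rw [dsub]; congr 1; abel
      have := dist_nonneg (x := x) (y := y)
      rw [e]; linarith
    -- the small Jensen-error lemma
    have small : ∀ a b : X, r ≤ dist a 0 → r ≤ dist b 0 → D ≤ dist a b →
        dist ((2 : ℤ) • f (h (a + b))) (f a + f b) < ε := by
      intro a b ha hb hd
      by_contra hcon
      push_neg at hcon
      have h1 := hJ a b ha hb
      have h2 := hD _ hd
      have h3 : 0 ≤ K / ε := le_of_lt (div_pos hK hε)
      have h4 : (K / ε) * ε ≤ φ (dist a b) * dist ((2 : ℤ) • f (h (a + b))) (f a + f b) :=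
        mul_le_mul h2 hcon (le_of_lt hε) (h3.trans h2)
      rw [div_mul_cancel₀ K (ne_of_gt hε)] at h4
      linarith
    -- four estimates
    have e1 : dist ((2 : ℤ) • F) (f (x + z) + f (y - z)) < ε := by
      have := small (x + z) (y - z) hxz.1 hyz.2 dD1
      rwa [show (x + z) + (y - z) = x + y from by abel] at this
    have e2 : dist ((2 : ℤ) • F) (f (x - z) + f (y + z)) < ε := by
      have := small (x - z) (y + z) hxz.2 hyz.1 dD2
      rwa [show (x - z) + (y + z) = x + y from by abel] at this
    have e3 : dist (f (x + z) + f (x - z)) ((2 : ℤ) • f x) < ε := by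
      have := small (x + z) (x - z) hxz.1 hxz.2 dD3
      rw [show h ((x + z) + (x - z)) = x from (hhu _ x (by abel)).symm] at this
      rwa [dist_comm] at this
    have e4 : dist (f (y + z) + f (y - z)) ((2 : ℤ) • f y) < ε := by
      have := small (y + z) (y - z) hyz.1 hyz.2 dD4
      rw [show h ((y + z) + (y - z)) = y from (hhu _ y (by abel)).symm] at this
      rwa [dist_comm] at this
    -- combine
    have h4F : (4 : ℤ) • F = (2 : ℤ) • F + (2 : ℤ) • F := by
      rw [← add_smul]; norm_num
    have t1 : dist ((4 : ℤ) • F) ((f (x + z) + f (y - z)) + (f (x - z) + f (y + z)))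
        ≤ dist ((2 : ℤ) • F) (f (x + z) + f (y - z)) +
          dist ((2 : ℤ) • F) (f (x - z) + f (y + z)) := by
      rw [h4F]; exact daddY _ _ _ _
    have hAB : (f (x + z) + f (y - z)) + (f (x - z) + f (y + z)) =
        (f (x + z) + f (x - z)) + (f (y + z) + f (y - z)) := by abel
    have t2 : dist ((f (x + z) + f (y - z)) + (f (x - z) + f (y + z)))
        ((2 : ℤ) • f x + (2 : ℤ) • f y)
        ≤ dist (f (x + z) + f (x - z)) ((2 : ℤ) • f x) +
          dist (f (y + z) + f (y - z)) ((2 : ℤ) • f y) := by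
      rw [hAB]; exact daddY _ _ _ _
    have t3 := dist_triangle ((4 : ℤ) • F)
      ((f (x + z) + f (y - z)) + (f (x - z) + f (y + z)))
      ((2 : ℤ) • f x + (2 : ℤ) • f y)
    linarith
  have h0 : dist ((4 : ℤ) • F) ((2 : ℤ) • f x + (2 : ℤ) • f y) ≤ 0 := by
    by_contra hc
    push_neg at hc
    have := key (dist ((4 : ℤ) • F) ((2 : ℤ) • f x + (2 : ℤ) • f y) / 8) (by linarith)
    linarith
  exact dist_le_zero.mp h0
end

section
/- Let X be the group of eventually-zero sequences (aᵢ)ᵢ∈ℕ with aᵢ ∈ {0,1}, under coordinatewise addition modulo 2, with metric d((aᵢ),(bᵢ)) = Σᵢ (aᵢ +₂ bᵢ)/i. Then (X,+,d) is a metric abelian group (d is a translation-invariant metric), the induced norm is unbounded on X, but 2X = {0}, so 2X is bounded. -/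
open Finsupp

/-- The distance on eventually-zero `ZMod 2`-sequences:
`d(a,b) = ∑_{i : aᵢ ≠ bᵢ} 1/i` (indexing coordinates by `1, 2, …`). -/
noncomputable def seqDist (a b : ℕ →₀ ZMod 2) : ℝ :=
  ∑ i ∈ (a - b).support, (1 : ℝ) / (i + 1)

lemma seqDist_nonneg_terms (s : Finset ℕ) : (0:ℝ) ≤ ∑ i ∈ s, (1:ℝ)/(i+1) :=
  Finset.sum_nonneg fun i _ => by positivity

/-- The group of eventually-zero `{0,1}`-sequences with coordinatewise addition
mod 2 and the metric `d(a,b) = ∑ (aᵢ +₂ bᵢ)/i` is a metric abelian group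
(translation-invariant metric), its norm is unbounded, but `2X = {0}`. -/
theorem seq_group_unbounded_but_two_torsion :
    (∀ a : ℕ →₀ ZMod 2, seqDist a a = 0) ∧
    (∀ a b : ℕ →₀ ZMod 2, seqDist a b = 0 → a = b) ∧
    (∀ a b : ℕ →₀ ZMod 2, seqDist a b = seqDist b a) ∧
    (∀ a b c : ℕ →₀ ZMod 2, seqDist a c ≤ seqDist a b + seqDist b c) ∧
    (∀ a b c : ℕ →₀ ZMod 2, seqDist (a + c) (b + c) = seqDist a b) ∧
    (∀ M : ℝ, ∃ a : ℕ →₀ ZMod 2, M < seqDist a 0) ∧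
    (∀ a : ℕ →₀ ZMod 2, a + a = 0) := by
  refine ⟨?_, ?_, ?_, ?_, ?_, ?_, ?_⟩
  · intro a; simp [seqDist]
  · intro a b h
    have : (a - b).support = ∅ := by
      by_contra hne
      obtain ⟨i, hi⟩ := Finset.nonempty_iff_ne_empty.2 hne
      have h0 := (Finset.sum_eq_zero_iff_of_nonneg
        (fun j _ => by positivity : ∀ j ∈ (a-b).support, (0:ℝ) ≤ 1/(j+1))).1 h i hi
      have : (0:ℝ) < 1/(i+1) := by positivity
      linarith
    have : a - b = 0 := Finsupp.support_eq_empty.1 this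
    exact sub_eq_zero.1 this
  · intro a b
    have : (a - b).support = (b - a).support := by
      ext i
      simp only [Finsupp.mem_support_iff, Finsupp.sub_apply, ne_eq, sub_eq_zero]
      exact not_congr eq_comm
    simp [seqDist, this]
  · intro a b c
    have hsub : (a - c).support ⊆ (a - b).support ∪ (b - c).support := by
      intro i hi
      simp only [Finsupp.mem_support_iff, Finset.mem_union] at hi ⊢
      by_contra h
      push_neg at h
      apply hi
      have : a i - c i = (a i - b i) + (b i - c i) := by ring
      simp only [Finsupp.sub_apply] at *
      rw [this, h.1, h.2, add_zero]
    calc seqDist a c ≤ ∑ i ∈ (a - b).support ∪ (b - c).support, (1:ℝ)/(i+1) :=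
          Finset.sum_le_sum_of_subset_of_nonneg hsub (fun i _ _ => by positivity)
      _ ≤ seqDist a b + seqDist b c := by
          rw [seqDist, seqDist]
          have := Finset.sum_union_inter (s₁ := (a-b).support) (s₂ := (b-c).support)
            (f := fun i : ℕ => (1:ℝ)/(i+1))
          have hnn := seqDist_nonneg_terms ((a-b).support ∩ (b-c).support)
          linarith
  · intro a b c
    have : a + c - (b + c) = a - b := add_sub_add_right_eq_sub a b c
    simp [seqDist, this]
  · intro M
    obtain ⟨n, hn⟩ := (Real.tendsto_sum_range_one_div_nat_succ_atTop.eventually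
      (Filter.eventually_gt_atTop M)).exists
    refine ⟨⟨Finset.range n, fun i => if i ∈ Finset.range n then 1 else 0, ?_⟩, ?_⟩
    · intro i
      by_cases h : i ∈ Finset.range n <;> simp [h]
    · have hsupp : ((⟨Finset.range n, fun i => if i ∈ Finset.range n then 1 else 0,
        by intro i; by_cases h : i ∈ Finset.range n <;> simp [h]⟩ : ℕ →₀ ZMod 2) - 0) =
        ⟨Finset.range n, fun i => if i ∈ Finset.range n then 1 else 0,
        by intro i; by_cases h : i ∈ Finset.range n <;> simp [h]⟩ := sub_zero _
      rw [seqDist, hsupp]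
      simpa using hn
  · intro a
    ext i
    simp [CharTwo.add_self_eq_zero]
end

section
/- Let X and Y be abelian groups with translation-invariant metrics, X unbounded, and let ε ≥ 0. Suppose f : X → Y satisfies ‖f(x+y) − f(x) − f(y)‖ < η for some fixed η > ε whenever ‖x‖ ≥ r and ‖y‖ ≥ r (for some r > 0). Then for any fixed x, y ∈ X one can choose u, v ∈ X with ‖u‖ ≥ r + ‖x‖ and ‖v‖ ≥ r + ‖x‖ + ‖y‖ + ‖u‖, and for such u, v all six elements u, v, u+v, x−u, y−v, x+y−u−v have norm at least r; consequently ‖f(x+y) − f(x) − f(y)‖ < 5η. -/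
/-- Key decomposition step for the Cauchy stability theorem: suitable auxiliary
points `u, v` exist, all six combinations have norm at least `r`, and the
Cauchy difference is bounded by `5η`. -/
theorem cauchy_key_step
    {X Y : Type*} [AddCommGroup X] [AddCommGroup Y]
    [MetricSpace X] [MetricSpace Y]
    (hdX : ∀ x y z : X, dist (x + z) (y + z) = dist x y)
    (hdY : ∀ x y z : Y, dist (x + z) (y + z) = dist x y)
    (hub : ∀ M : ℝ, ∃ x : X, M < dist x 0)
    (ε η r : ℝ) (hε : 0 ≤ ε) (hη : ε < η) (hr : 0 < r)
    (f : X → Y)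
    (hf : ∀ x y : X, r ≤ dist x 0 → r ≤ dist y 0 →
      dist (f (x + y)) (f x + f y) < η) :
    ∀ x y : X,
      (∃ u v : X, r + dist x 0 ≤ dist u 0 ∧
        r + dist x 0 + dist y 0 + dist u 0 ≤ dist v 0) ∧
      (∀ u v : X, r + dist x 0 ≤ dist u 0 →
        r + dist x 0 + dist y 0 + dist u 0 ≤ dist v 0 →
        r ≤ dist u 0 ∧ r ≤ dist v 0 ∧ r ≤ dist (u + v) 0 ∧
        r ≤ dist (x - u) 0 ∧ r ≤ dist (y - v) 0 ∧
        r ≤ dist (x + y - u - v) 0) ∧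
      dist (f (x + y)) (f x + f y) < 5 * η := by
  -- norm lemmas in X
  have hXneg : ∀ a : X, dist (-a) 0 = dist a 0 := by
    intro a
    have h := hdX (-a) 0 a
    simpa [dist_comm] using h.symm
  have hXsub : ∀ a b : X, dist (a + b) 0 ≤ dist a 0 + dist b 0 := by
    intro a b
    calc dist (a + b) 0 ≤ dist (a + b) b + dist b 0 := dist_triangle _ _ _
    _ = dist a 0 + dist b 0 := by rw [show dist (a + b) b = dist a 0 by
        have h := hdX a 0 b; simpa using h]
  have hXrev : ∀ a b : X, dist a 0 ≤ dist (a + b) 0 + dist b 0 := by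
    intro a b
    have h := hXsub (a + b) (-b)
    simpa [hXneg] using h
  have hXsc : ∀ a b : X, dist (a - b) 0 = dist (b - a) 0 := by
    intro a b
    rw [← hXneg (a - b), neg_sub]
  have hXrev' : ∀ a b : X, dist a 0 - dist b 0 ≤ dist (a - b) 0 := by
    intro a b
    have h := hXrev a (-b)
    rw [hXneg, ← sub_eq_add_neg] at h
    linarith
  -- norm lemmas in Y
  have hYeq : ∀ a b : Y, dist a b = dist (a - b) 0 := by
    intro a b
    have h := hdY (a - b) 0 b
    simpa using h
  have hYneg : ∀ a : Y, dist (-a) 0 = dist a 0 := by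
    intro a
    have h := hdY (-a) 0 a
    simpa [dist_comm] using h.symm
  have hYsub : ∀ a b : Y, dist (a + b) 0 ≤ dist a 0 + dist b 0 := by
    intro a b
    calc dist (a + b) 0 ≤ dist (a + b) b + dist b 0 := dist_triangle _ _ _
    _ = dist a 0 + dist b 0 := by rw [show dist (a + b) b = dist a 0 by
        have h := hdY a 0 b; simpa using h]
  have hg : ∀ a b : X, r ≤ dist a 0 → r ≤ dist b 0 →
      dist (f (a + b) - f a - f b) 0 < η := by
    intro a b ha hb
    have h := hf a b ha hb
    rw [hYeq, sub_add_eq_sub_sub] at h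
    exact h
  intro x y
  have hx0 : (0:ℝ) ≤ dist x 0 := dist_nonneg
  have hy0 : (0:ℝ) ≤ dist y 0 := dist_nonneg
  have hsix : ∀ u v : X, r + dist x 0 ≤ dist u 0 →
      r + dist x 0 + dist y 0 + dist u 0 ≤ dist v 0 →
      r ≤ dist u 0 ∧ r ≤ dist v 0 ∧ r ≤ dist (u + v) 0 ∧
      r ≤ dist (x - u) 0 ∧ r ≤ dist (y - v) 0 ∧
      r ≤ dist (x + y - u - v) 0 := by
    intro u v hu hv
    refine ⟨by linarith, by linarith, ?_, ?_, ?_, ?_⟩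
    · have h := hXrev v u
      rw [add_comm v u] at h
      linarith
    · have h := hXrev' u x
      rw [hXsc u x] at h
      linarith
    · have h := hXrev' v y
      rw [hXsc v y] at h
      linarith
    · have h := hXrev' v (x + y - u)
      rw [hXsc v (x + y - u)] at h
      have h2 : dist (x + y - u) 0 ≤ dist x 0 + dist y 0 + dist u 0 := by
        have t1 := hXsub (x + y) (-u)
        have t2 := hXsub x y
        rw [hXneg] at t1
        have : x + y + -u = x + y - u := by abel
        rw [this] at t1
        linarith
      linarith
  refine ⟨?_, hsix, ?_⟩
  · obtain ⟨u, hu⟩ := hub (r + dist x 0)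
    obtain ⟨v, hv⟩ := hub (r + dist x 0 + dist y 0 + dist u 0)
    exact ⟨u, v, hu.le, hv.le⟩
  · obtain ⟨u, hu⟩ := hub (r + dist x 0)
    obtain ⟨v, hv⟩ := hub (r + dist x 0 + dist y 0 + dist u 0)
    obtain ⟨h1, h2, h3, h4, h5, h6⟩ := hsix u v hu.le hv.le
    have hc1 := hg (x + y - u - v) (u + v) h6 h3
    have hc2 := hg u v h1 h2
    have hc3 := hg (x - u) u h4 h1
    have hc4 := hg (y - v) v h5 h2
    have hc5 := hg (x - u) (y - v) h4 h5
    have hid : f (x + y) - f x - f y =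
        (f ((x + y - u - v) + (u + v)) - f (x + y - u - v) - f (u + v))
        + (f (u + v) - f u - f v)
        + (-(f ((x - u) + u) - f (x - u) - f u))
        + (-(f ((y - v) + v) - f (y - v) - f v))
        + (f ((x - u) + (y - v)) - f (x - u) - f (y - v)) := by
      rw [show (x + y - u - v) + (u + v) = x + y from by abel,
          show (x - u) + u = x from by abel,
          show (y - v) + v = y from by abel,
          show (x - u) + (y - v) = x + y - u - v from by abel]
      abel
    have h5y : ∀ a b c d e : Y, dist (a + b + c + d + e) 0 ≤
        dist a 0 + dist b 0 + dist c 0 + dist d 0 + dist e 0 := by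
      intro a b c d e
      have t1 := hYsub a b
      have t2 := hYsub (a + b) c
      have t3 := hYsub (a + b + c) d
      have t4 := hYsub (a + b + c + d) e
      linarith
    have hkey : dist (f (x + y)) (f x + f y) = dist (f (x + y) - f x - f y) 0 := by
      rw [hYeq, sub_add_eq_sub_sub]
    rw [hkey, hid]
    have hb := h5y (f ((x + y - u - v) + (u + v)) - f (x + y - u - v) - f (u + v))
      (f (u + v) - f u - f v)
      (-(f ((x - u) + u) - f (x - u) - f u))
      (-(f ((y - v) + v) - f (y - v) - f v))
      (f ((x - u) + (y - v)) - f (x - u) - f (y - v))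
    rw [hYneg, hYneg] at hb
    linarith
end

section
/- Let X and Y be abelian groups with translation-invariant metrics, X uniquely 2-divisible, and let η > 0 and r > 0. Suppose f : X → Y satisfies ‖2f((x+y)/2) − f(x) − f(y)‖ < η whenever ‖x‖ ≥ r and ‖y‖ ≥ r. Then for any x, y ∈ X and any u ∈ X with ‖u‖ ≥ r + ‖x‖ + ‖y‖, the four elements x+u, y+u, x−u, y−u all have norm ≥ r, and consequently ‖4f((x+y)/2) − 2f(x) − 2f(y)‖ < 4η. -/
/-- Key estimation step for the Jensen stability theorem. `h` is the halving
map on the uniquely 2-divisible group `X`. -/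
theorem jensen_key_step
    {X Y : Type*} [AddCommGroup X] [AddCommGroup Y]
    [MetricSpace X] [MetricSpace Y]
    (hdX : ∀ x y z : X, dist (x + z) (y + z) = dist x y)
    (hdY : ∀ x y z : Y, dist (x + z) (y + z) = dist x y)
    (h : X → X) (hh : ∀ x : X, h x + h x = x)
    (hhu : ∀ x z : X, z + z = x → z = h x)
    (η r : ℝ) (hη : 0 < η) (hr : 0 < r)
    (f : X → Y)
    (hf : ∀ x y : X, r ≤ dist x 0 → r ≤ dist y 0 →
      dist ((2 : ℤ) • f (h (x + y))) (f x + f y) < η) :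
    ∀ x y u : X, r + dist x 0 + dist y 0 ≤ dist u 0 →
      (r ≤ dist (x + u) 0 ∧ r ≤ dist (y + u) 0 ∧
       r ≤ dist (x - u) 0 ∧ r ≤ dist (y - u) 0) ∧
      dist ((4 : ℤ) • f (h (x + y))) ((2 : ℤ) • f x + (2 : ℤ) • f y) < 4 * η := by
  intro x y u hu
  -- basic norm facts on X
  have hXneg : ∀ a : X, dist (-a) 0 = dist a 0 := by
    intro a
    have := hdX (-a) 0 a
    simpa [dist_comm] using this.symm
  have key : ∀ a v : X, dist v 0 - dist a 0 ≤ dist (a + v) 0 := by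
    intro a v
    have h1 : dist (a + v) a = dist v 0 := by
      have := hdX v 0 a
      simpa [add_comm] using this
    have h2 := dist_triangle (a + v) 0 a
    have h3 : dist 0 a = dist a 0 := dist_comm _ _
    linarith [h1 ▸ h2, h3]
  have hx0 : (0:ℝ) ≤ dist x 0 := dist_nonneg
  have hy0 : (0:ℝ) ≤ dist y 0 := dist_nonneg
  have hxu : r ≤ dist (x + u) 0 := by have := key x u; linarith
  have hyu : r ≤ dist (y + u) 0 := by have := key y u; linarith
  have hxmu : r ≤ dist (x - u) 0 := by
    have := key x (-u); rw [hXneg u] at this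
    simpa [sub_eq_add_neg] using le_trans (by linarith) this
  have hymu : r ≤ dist (y - u) 0 := by
    have := key y (-u); rw [hXneg u] at this
    simpa [sub_eq_add_neg] using le_trans (by linarith) this
  refine ⟨⟨hxu, hyu, hxmu, hymu⟩, ?_⟩
  -- norm facts on Y
  have nY : ∀ a b : Y, dist a b = dist (a - b) 0 := by
    intro a b
    have := hdY (a - b) 0 b
    simpa using this
  have nYneg : ∀ a : Y, dist (-a) 0 = dist a 0 := by
    intro a
    have := hdY (-a) 0 a
    simpa [dist_comm] using this.symm
  have nYadd : ∀ a b : Y, dist (a + b) 0 ≤ dist a 0 + dist b 0 := by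
    intro a b
    have h1 : dist (a + b) b = dist a 0 := by
      have := hdY a 0 b; simpa using this
    have h2 := dist_triangle (a + b) b 0
    linarith [h1 ▸ h2]
  -- the four Jensen differences
  have e1arg : (x + u) + (y - u) = x + y := by abel
  have e2arg : (x - u) + (y + u) = x + y := by abel
  have hx2 : x = h ((x + u) + (x - u)) := by
    apply hhu; abel
  have hy2 : y = h ((y + u) + (y - u)) := by
    apply hhu; abel
  have E1 := hf (x + u) (y - u) hxu hymu
  have E2 := hf (x - u) (y + u) hxmu hyu
  have E3 := hf (x + u) (x - u) hxu hxmu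
  have E4 := hf (y + u) (y - u) hyu hymu
  rw [e1arg] at E1
  rw [e2arg] at E2
  rw [← hx2] at E3
  rw [← hy2] at E4
  rw [nY] at E1 E2 E3 E4 ⊢
  set A := (2 : ℤ) • f (h (x + y)) - (f (x + u) + f (y - u)) with hA
  set B := (2 : ℤ) • f (h (x + y)) - (f (x - u) + f (y + u)) with hB
  set C := (2 : ℤ) • f x - (f (x + u) + f (x - u)) with hC
  set D := (2 : ℤ) • f y - (f (y + u) + f (y - u)) with hD
  have hsum : (4 : ℤ) • f (h (x + y)) - ((2 : ℤ) • f x + (2 : ℤ) • f y)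
      = (A + B) + (-C + -D) := by
    rw [hA, hB, hC, hD]
    simp only [two_zsmul, show (4:ℤ) • f (h (x+y)) = f (h (x+y)) + f (h (x+y)) + f (h (x+y)) + f (h (x+y)) by rw [show (4:ℤ) = 1+1+1+1 by norm_num]; simp [add_zsmul]; abel]
    abel
  rw [hsum]
  calc dist ((A + B) + (-C + -D)) 0
      ≤ dist (A + B) 0 + dist (-C + -D) 0 := nYadd _ _
    _ ≤ (dist A 0 + dist B 0) + (dist (-C) 0 + dist (-D) 0) := by
        gcongr <;> [exact nYadd A B; exact nYadd (-C) (-D)]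
    _ = dist A 0 + dist B 0 + (dist C 0 + dist D 0) := by rw [nYneg, nYneg]
    _ < 4 * η := by linarith
end

section
/- Let X and Y be abelian groups with translation-invariant metrics such that 2X is unbounded, and suppose f : X → Y satisfies: for every ε > 0 there exist r, R > 0 such that ‖f(x+y) − f(x) − f(y)‖ < ε whenever ‖x‖ ≥ r, ‖y‖ ≥ r, and ‖x − y‖ ≥ R. Then f is additive. -/
/-- Core reduction in the hyperstability theorem for the Cauchy equation:
smallness of the Cauchy difference for large, well-separated arguments
forces exact additivity, when `2X` is unbounded. -/
theorem cauchy_hyperstability_core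
    {X Y : Type*} [AddCommGroup X] [AddCommGroup Y]
    [MetricSpace X] [MetricSpace Y]
    (hdX : ∀ x y z : X, dist (x + z) (y + z) = dist x y)
    (hdY : ∀ x y z : Y, dist (x + z) (y + z) = dist x y)
    (hub2 : ∀ M : ℝ, ∃ x : X, M < dist (x + x) 0)
    (f : X → Y)
    (hf : ∀ ε : ℝ, 0 < ε → ∃ r : ℝ, 0 < r ∧ ∃ R : ℝ, 0 < R ∧
      ∀ x y : X, r ≤ dist x 0 → r ≤ dist y 0 → R ≤ dist x y →
        dist (f (x + y)) (f x + f y) < ε) :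
    ∀ x y : X, f (x + y) = f x + f y := by
  -- basic facts about the "norm" on X
  have hXsub : ∀ u v : X, dist u v = dist (u - v) 0 := by
    intro u v
    have h := hdX u v (-v)
    simp only [add_neg_cancel] at h
    rw [← h, sub_eq_add_neg]
  have hXneg : ∀ u : X, dist (-u) 0 = dist u 0 := by
    intro u
    have h := hdX (-u) 0 u
    simp only [neg_add_cancel, zero_add] at h
    rw [← h, dist_comm]
  have hXtri : ∀ u v : X, dist (u + v) 0 ≤ dist u 0 + dist v 0 := by
    intro u v
    have h1 : dist (u + v) v = dist u 0 := by
      have := hdX u 0 v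
      simpa using this
    calc dist (u + v) 0 ≤ dist (u + v) v + dist v 0 := dist_triangle _ _ _
      _ = dist u 0 + dist v 0 := by rw [h1]
  have hlow : ∀ u v : X, dist u 0 - dist v 0 ≤ dist (u + v) 0 := by
    intro u v
    have h := hXtri (u + v) (-v)
    rw [hXneg, add_neg_cancel_right] at h
    linarith
  -- translation invariance on the other side in Y
  have hdY' : ∀ a b c : Y, dist (c + a) (c + b) = dist a b := by
    intro a b c
    rw [add_comm c a, add_comm c b]
    exact hdY a b c
  -- Key: f (x+y) + f 0 = f x + f y for all x y
  have key : ∀ x y : X, f (x + y) + f 0 = f x + f y := by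
    intro x y
    have hd : ∀ ε : ℝ, 0 < ε → dist (f (x + y) + f 0) (f x + f y) ≤ 4 * ε := by
      intro ε hε
      obtain ⟨r, hr, R, hR, H⟩ := hf ε hε
      set M : ℝ := dist x 0 + dist y 0 + r + R with hM
      obtain ⟨z, hz⟩ := hub2 (2 * M)
      have hnx : (0:ℝ) ≤ dist x 0 := dist_nonneg
      have hny : (0:ℝ) ≤ dist y 0 := dist_nonneg
      have h2z : 2 * M < dist (z + z) 0 := hz
      have hzz : dist (z + z) 0 ≤ dist z 0 + dist z 0 := hXtri z z
      have hnz : M < dist z 0 := by linarith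
      -- norm lower bounds: r ≤ ‖w + z‖ whenever ‖w‖ + r ≤ M
      have hrad : ∀ w : X, dist w 0 + r ≤ M → r ≤ dist (w + z) 0 := by
        intro w hw
        have h := hlow z w
        rw [add_comm z w] at h
        linarith
      -- separation lower bounds: R ≤ ‖w + (z+z)‖ whenever ‖w‖ + R ≤ 2M
      have hsep : ∀ w : X, dist w 0 + R ≤ 2 * M → R ≤ dist (w + (z + z)) 0 := by
        intro w hw
        have h := hlow (z + z) w
        rw [add_comm (z + z) w] at h
        linarith
      -- the four applications of H
      -- (1) arguments x+z and y-z
      have a1r : r ≤ dist (x + z) 0 := hrad x (by simp [hM]; linarith)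
      have a1r' : r ≤ dist (y - z) 0 := by
        have h : dist (y - z) 0 = dist (-y + z) 0 := by
          have he : -(y - z) = -y + z := by abel
          rw [← hXneg (y - z), he]
        rw [h]
        exact hrad (-y) (by rw [hXneg]; simp [hM]; linarith)
      have hnxy : dist (x - y) 0 ≤ dist x 0 + dist y 0 := by
        have h := hXtri x (-y)
        rw [hXneg] at h
        rw [sub_eq_add_neg]
        exact h
      have a1s : R ≤ dist (x + z) (y - z) := by
        rw [hXsub]
        have he : (x + z) - (y - z) = (x - y) + (z + z) := by abel
        rw [he]
        exact hsep (x - y) (by simp [hM]; linarith)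
      have d1 : dist (f (x + y)) (f (x + z) + f (y - z)) < ε := by
        have := H (x + z) (y - z) a1r a1r' a1s
        have he : (x + z) + (y - z) = x + y := by abel
        rwa [he] at this
      -- (2) arguments x+z and -z
      have hnzr : r ≤ dist z 0 := by simp [hM] at hnz ⊢; linarith
      have a2r' : r ≤ dist (-z) 0 := by rw [hXneg]; exact hnzr
      have a2s : R ≤ dist (x + z) (-z) := by
        rw [hXsub]
        have he : (x + z) - (-z) = x + (z + z) := by abel
        rw [he]
        exact hsep x (by simp [hM]; linarith)
      have d2 : dist (f x) (f (x + z) + f (-z)) < ε := by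
        have := H (x + z) (-z) a1r a2r' a2s
        have he : (x + z) + (-z) = x := by abel
        rwa [he] at this
      -- (3) arguments y-z and z
      have a3s : R ≤ dist (y - z) z := by
        rw [hXsub]
        have he : (y - z) - z = -(-y + (z + z)) := by abel
        rw [he, hXneg]
        exact hsep (-y) (by rw [hXneg]; simp [hM]; linarith)
      have d3 : dist (f y) (f (y - z) + f z) < ε := by
        have := H (y - z) z a1r' hnzr a3s
        have he : (y - z) + z = y := by abel
        rwa [he] at this
      -- (4) arguments z and -z
      have a4s : R ≤ dist z (-z) := by
        rw [hXsub]
        have he : z - (-z) = 0 + (z + z) := by abel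
        rw [he]
        exact hsep 0 (by simp; linarith)
      have d4 : dist (f 0) (f z + f (-z)) < ε := by
        have := H z (-z) hnzr a2r' a4s
        have he : z + (-z) = (0 : X) := by abel
        rwa [he] at this
      -- combine in Y
      set A := f (x + y)
      set B := f 0
      set P := f (x + z)
      set Q := f (y - z)
      set S := f z
      set T := f (-z)
      have c1 : dist (A + B) (P + Q + B) < ε := by rw [hdY A (P + Q) B]; exact d1
      have c2 : dist (P + Q + B) (P + Q + (S + T)) < ε := by
        rw [hdY' B (S + T) (P + Q)]; exact d4
      have c3 : dist (P + Q + (S + T)) (f x + (Q + S)) < ε := by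
        have he : P + Q + (S + T) = (P + T) + (Q + S) := by abel
        rw [he, hdY (P + T) (f x) (Q + S), dist_comm]
        exact d2
      have c4 : dist (f x + (Q + S)) (f x + f y) < ε := by
        rw [hdY' (Q + S) (f y) (f x), dist_comm]
        exact d3
      calc dist (A + B) (f x + f y)
          ≤ dist (A + B) (P + Q + B) + dist (P + Q + B) (P + Q + (S + T))
            + dist (P + Q + (S + T)) (f x + (Q + S))
            + dist (f x + (Q + S)) (f x + f y) := by
            exact dist_triangle4 _ _ _ _ |>.trans (by
              gcongr
              exact dist_triangle _ _ _)
        _ ≤ 4 * ε := by linarith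
    have hzero : dist (f (x + y) + f 0) (f x + f y) ≤ 0 := by
      by_contra h
      push_neg at h
      have := hd (dist (f (x + y) + f 0) (f x + f y) / 8) (by linarith)
      linarith
    exact eq_of_dist_eq_zero (le_antisymm hzero dist_nonneg)
  -- now show f 0 = 0
  have h0 : f 0 = 0 := by
    have hzero : dist (f 0) 0 ≤ 0 := by
      by_contra h
      push_neg at h
      set δ := dist (f 0) 0 with hδ
      obtain ⟨r, hr, R, hR, H⟩ := hf (δ / 2) (by linarith)
      obtain ⟨z, hz⟩ := hub2 (2 * r + R)
      have hzz : dist (z + z) 0 ≤ dist z 0 + dist z 0 := hXtri z z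
      have hnzr : r ≤ dist z 0 := by linarith
      have hnzr' : r ≤ dist (-z) 0 := by rw [hXneg]; exact hnzr
      have hs : R ≤ dist z (-z) := by
        rw [hXsub, sub_neg_eq_add]
        linarith
      have hH := H z (-z) hnzr hnzr' hs
      have he : z + (-z) = (0 : X) := by abel
      rw [he] at hH
      have hk := key z (-z)
      rw [he] at hk
      -- f 0 + f 0 = f z + f (-z)
      rw [← hk] at hH
      -- dist (f 0) (f 0 + f 0) < δ/2, but it equals dist 0 (f 0) = δ
      have heq : dist (f 0) (f 0 + f 0) = δ := by
        have h2 := hdY 0 (f 0) (f 0)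
        rw [zero_add] at h2
        rw [h2, dist_comm]
      rw [heq] at hH
      linarith
    exact eq_of_dist_eq_zero (le_antisymm hzero dist_nonneg)
  intro x y
  have := key x y
  rw [h0, add_zero] at this
  exact this
end

section
/- Let X and Y be abelian groups with translation-invariant metrics, X uniquely 2-divisible, with 2X unbounded, and suppose f : X → Y satisfies: for every ε > 0 there exist r, R > 0 such that ‖2f((x+y)/2) − f(x) − f(y)‖ < ε whenever ‖x‖ ≥ r, ‖y‖ ≥ r, and ‖x − y‖ ≥ R. Then 4f((x+y)/2) = 2f(x) + 2f(y) for all x, y ∈ X. -/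
/-- Core reduction in the hyperstability theorem for the Jensen equation.
`h` is the halving map on the uniquely 2-divisible group `X`; `2X` unbounded. -/
theorem jensen_hyperstability_core
    {X Y : Type*} [AddCommGroup X] [AddCommGroup Y]
    [MetricSpace X] [MetricSpace Y]
    (hdX : ∀ x y z : X, dist (x + z) (y + z) = dist x y)
    (hdY : ∀ x y z : Y, dist (x + z) (y + z) = dist x y)
    (h : X → X) (hh : ∀ x : X, h x + h x = x)
    (hhu : ∀ x z : X, z + z = x → z = h x)
    (hub2 : ∀ M : ℝ, ∃ x : X, M < dist (x + x) 0)
    (f : X → Y)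
    (hf : ∀ ε : ℝ, 0 < ε → ∃ r : ℝ, 0 < r ∧ ∃ R : ℝ, 0 < R ∧
      ∀ x y : X, r ≤ dist x 0 → r ≤ dist y 0 → R ≤ dist x y →
        dist ((2 : ℤ) • f (h (x + y))) (f x + f y) < ε) :
    ∀ x y : X, (4 : ℤ) • f (h (x + y)) = (2 : ℤ) • f x + (2 : ℤ) • f y := by
  -- basic facts about the norm `dist · 0` in X
  have nX : ∀ a b : X, dist a b = dist (a - b) 0 := by
    intro a b
    have := hdX (a - b) 0 b
    simpa using this
  have subX : ∀ a b : X, dist (a + b) 0 ≤ dist a 0 + dist b 0 := by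
    intro a b
    have h1 : dist (a + b) b = dist a 0 := by simpa using hdX a 0 b
    calc dist (a + b) 0 ≤ dist (a + b) b + dist b 0 := dist_triangle _ _ _
      _ = dist a 0 + dist b 0 := by rw [h1]
  have negX : ∀ a : X, dist (-a) 0 = dist a 0 := by
    intro a
    have := hdX (-a) 0 a
    simp only [neg_add_cancel, zero_add] at this
    rw [← this, dist_comm]
  have key1 : ∀ a b : X, dist a 0 ≤ dist (a + b) 0 + dist b 0 := by
    intro a b
    have := subX (a + b) (-b)
    simpa [negX b] using this
  have sumY : ∀ a b c d : Y, dist (a + b) (c + d) ≤ dist a c + dist b d := by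
    intro a b c d
    have h1 : dist (a + b) (c + b) = dist a c := hdY a c b
    have h2 : dist (c + b) (c + d) = dist b d := by
      rw [add_comm c b, add_comm c d]; exact hdY b d c
    calc dist (a + b) (c + d) ≤ dist (a + b) (c + b) + dist (c + b) (c + d) :=
          dist_triangle _ _ _
      _ = dist a c + dist b d := by rw [h1, h2]
  intro x y
  -- it suffices to show the distance is < ε for all ε > 0
  have key : ∀ ε : ℝ, 0 < ε →
      dist ((4 : ℤ) • f (h (x + y))) ((2 : ℤ) • f x + (2 : ℤ) • f y) < ε := by
    intro ε hε
    obtain ⟨r, hr, R, hR, H⟩ := hf (ε / 4) (by positivity)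
    obtain ⟨u, hu⟩ := hub2 (2 * r + R + 2 * dist x 0 + 2 * dist y 0)
    set s := dist (u + u) 0 with hs
    have h2u : dist (u + u) 0 ≤ dist u 0 + dist u 0 := subX u u
    have hx0 : (0:ℝ) ≤ dist x 0 := dist_nonneg
    have hy0 : (0:ℝ) ≤ dist y 0 := dist_nonneg
    -- norm lower bounds
    have hnxu : r ≤ dist (x + u) 0 := by
      have h1 := key1 u x
      rw [add_comm u x] at h1
      linarith
    have hnxu' : r ≤ dist (x - u) 0 := by
      have h1 := key1 (-u) x
      rw [negX u] at h1
      rw [show -u + x = x - u by abel] at h1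
      linarith
    have hnyu : r ≤ dist (y + u) 0 := by
      have h1 := key1 u y
      rw [add_comm u y] at h1
      linarith
    have hnyu' : r ≤ dist (y - u) 0 := by
      have h1 := key1 (-u) y
      rw [negX u] at h1
      rw [show -u + y = y - u by abel] at h1
      linarith
    -- distance lower bounds
    have hnyx : dist (y - x) 0 ≤ dist y 0 + dist x 0 := by
      have := subX y (-x)
      rw [negX x] at this
      simpa [sub_eq_add_neg] using this
    have hnxy : dist (x - y) 0 ≤ dist x 0 + dist y 0 := by
      have := subX x (-y)
      rw [negX y] at this
      simpa [sub_eq_add_neg] using this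
    have hd1 : R ≤ dist (x + u) (y - u) := by
      rw [nX, show x + u - (y - u) = (x - y) + (u + u) by abel]
      have h1 := key1 (u + u) (x - y)
      rw [add_comm (u + u) (x - y)] at h1
      linarith
    have hd2 : R ≤ dist (x - u) (y + u) := by
      rw [nX, show x - u - (y + u) = -((y - x) + (u + u)) by abel, negX]
      have h1 := key1 (u + u) (y - x)
      rw [add_comm (u + u) (y - x)] at h1
      linarith
    have hd3 : R ≤ dist (x + u) (x - u) := by
      rw [nX, show x + u - (x - u) = u + u by abel]
      linarith
    have hd4 : R ≤ dist (y + u) (y - u) := by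
      rw [nX, show y + u - (y - u) = u + u by abel]
      linarith
    -- four applications of H
    have E1 := H (x + u) (y - u) hnxu hnyu' hd1
    rw [show (x + u) + (y - u) = x + y by abel] at E1
    have E2 := H (x - u) (y + u) hnxu' hnyu hd2
    rw [show (x - u) + (y + u) = x + y by abel] at E2
    have E3 := H (x + u) (x - u) hnxu hnxu' hd3
    rw [show (x + u) + (x - u) = x + x by abel,
        show h (x + x) = x from (hhu (x + x) x rfl).symm] at E3
    have E4 := H (y + u) (y - u) hnyu hnyu' hd4
    rw [show (y + u) + (y - u) = y + y by abel,
        show h (y + y) = y from (hhu (y + y) y rfl).symm] at E4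
    -- combine
    set A := f (h (x + y))
    have h4 : (4 : ℤ) • A = (2 : ℤ) • A + (2 : ℤ) • A := by
      rw [← add_zsmul]; norm_num
    have step1 : dist ((4 : ℤ) • A) ((f (x + u) + f (y - u)) + (f (x - u) + f (y + u)))
        ≤ dist ((2 : ℤ) • A) (f (x + u) + f (y - u)) +
          dist ((2 : ℤ) • A) (f (x - u) + f (y + u)) := by
      rw [h4]; exact sumY _ _ _ _
    have step2 : dist ((f (x + u) + f (y - u)) + (f (x - u) + f (y + u)))
        ((2 : ℤ) • f x + (2 : ℤ) • f y)
        ≤ dist (f (x + u) + f (x - u)) ((2 : ℤ) • f x) +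
          dist (f (y + u) + f (y - u)) ((2 : ℤ) • f y) := by
      rw [show (f (x + u) + f (y - u)) + (f (x - u) + f (y + u))
            = (f (x + u) + f (x - u)) + (f (y + u) + f (y - u)) by abel]
      exact sumY _ _ _ _
    have E3' : dist (f (x + u) + f (x - u)) ((2 : ℤ) • f x) < ε / 4 := by
      rw [dist_comm]; exact E3
    have E4' : dist (f (y + u) + f (y - u)) ((2 : ℤ) • f y) < ε / 4 := by
      rw [dist_comm]; exact E4
    calc dist ((4 : ℤ) • A) ((2 : ℤ) • f x + (2 : ℤ) • f y)
        ≤ dist ((4 : ℤ) • A) ((f (x + u) + f (y - u)) + (f (x - u) + f (y + u)))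
          + dist ((f (x + u) + f (y - u)) + (f (x - u) + f (y + u)))
            ((2 : ℤ) • f x + (2 : ℤ) • f y) := dist_triangle _ _ _
      _ < ε := by linarith [step1, step2, E1, E2, E3', E4']
  have hdist : dist ((4 : ℤ) • f (h (x + y))) ((2 : ℤ) • f x + (2 : ℤ) • f y) = 0 := by
    by_contra hne
    have hpos : 0 < dist ((4 : ℤ) • f (h (x + y))) ((2 : ℤ) • f x + (2 : ℤ) • f y) :=
      lt_of_le_of_ne dist_nonneg (Ne.symm hne)
    exact absurd (key _ hpos) (lt_irrefl _)
  exact eq_of_dist_eq_zero hdist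
end

section
/- Let X and Y be abelian groups with translation-invariant metrics, with 2X unbounded. Then for any r, R > 0 and any x, y ∈ X there exist u, v ∈ X with ‖2u‖ ≥ 2r + R + 2‖x‖ and ‖2v‖ ≥ 2r + 2R + 2‖x‖ + 2‖y‖ + 2‖u‖, and for such u, v one has min(‖u‖, ‖v‖, ‖u+v‖, ‖x−u‖, ‖y−v‖, ‖x+y−u−v‖) ≥ r and min(‖x−2u‖, ‖y−2v‖, ‖x−y−u+v‖, ‖u−v‖, ‖x+y−2(u+v)‖) ≥ R. -/
/-- The combinatorial core of the hyperstability proof for the Cauchy equation: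
when `2X` is unbounded, suitable auxiliary points `u, v` exist, with the stated
lower norm bounds on all relevant combinations. -/
theorem aux_points_hyperstability
    {X Y : Type*} [AddCommGroup X] [AddCommGroup Y]
    [MetricSpace X] [MetricSpace Y]
    (hdX : ∀ x y z : X, dist (x + z) (y + z) = dist x y)
    (hdY : ∀ x y z : Y, dist (x + z) (y + z) = dist x y)
    (hub2 : ∀ M : ℝ, ∃ x : X, M < dist (x + x) 0) :
    ∀ r R : ℝ, 0 < r → 0 < R → ∀ x y : X,
      (∃ u v : X, 2 * r + R + 2 * dist x 0 ≤ dist (u + u) 0 ∧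
        2 * r + 2 * R + 2 * dist x 0 + 2 * dist y 0 + 2 * dist u 0 ≤ dist (v + v) 0) ∧
      (∀ u v : X, 2 * r + R + 2 * dist x 0 ≤ dist (u + u) 0 →
        2 * r + 2 * R + 2 * dist x 0 + 2 * dist y 0 + 2 * dist u 0 ≤ dist (v + v) 0 →
        (r ≤ dist u 0 ∧ r ≤ dist v 0 ∧ r ≤ dist (u + v) 0 ∧
         r ≤ dist (x - u) 0 ∧ r ≤ dist (y - v) 0 ∧
         r ≤ dist (x + y - u - v) 0) ∧
        (R ≤ dist (x - (u + u)) 0 ∧ R ≤ dist (y - (v + v)) 0 ∧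
         R ≤ dist (x - y - u + v) 0 ∧ R ≤ dist (u - v) 0 ∧
         R ≤ dist (x + y - ((u + v) + (u + v))) 0)) := by
  intro r R hr hR x y
  have nadd : ∀ a b : X, dist (a + b) 0 ≤ dist a 0 + dist b 0 := by
    intro a b
    have h1 : dist (a + b) b = dist a 0 := by simpa using hdX a 0 b
    calc dist (a + b) 0 ≤ dist (a + b) b + dist b 0 := dist_triangle _ _ _
      _ = dist a 0 + dist b 0 := by rw [h1]
  have nneg : ∀ a : X, dist (-a) 0 = dist a 0 := by
    intro a
    have h := hdX (-a) 0 a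
    simp only [neg_add_cancel, zero_add] at h
    rw [← h, dist_comm]
  have key2 : ∀ a b : X, dist a 0 ≤ dist (a + b) 0 + dist b 0 := by
    intro a b
    have h := nadd (a + b) (-b)
    rw [nneg] at h
    rwa [show a + b + -b = a from by abel] at h
  constructor
  · obtain ⟨u, hu⟩ := hub2 (2 * r + R + 2 * dist x 0)
    obtain ⟨v, hv⟩ := hub2 (2 * r + 2 * R + 2 * dist x 0 + 2 * dist y 0 + 2 * dist u 0)
    exact ⟨u, v, hu.le, hv.le⟩
  · intro u v hu hv
    have hu2 : dist (u + u) 0 ≤ 2 * dist u 0 := by have := nadd u u; linarith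
    have hv2 : dist (v + v) 0 ≤ 2 * dist v 0 := by have := nadd v v; linarith
    have nx : (0:ℝ) ≤ dist x 0 := dist_nonneg
    have ny : (0:ℝ) ≤ dist y 0 := dist_nonneg
    have nu : (0:ℝ) ≤ dist u 0 := dist_nonneg
    refine ⟨⟨?_, ?_, ?_, ?_, ?_, ?_⟩, ?_, ?_, ?_, ?_, ?_⟩
    · linarith
    · linarith
    · have h := key2 v (u + v)
      rw [show v + (u + v) = (u + v) + v from by abel] at h
      have h2 := key2 ((u + v) + v) u
      rw [show (u + v) + v + u = (u + v) + (u + v) from by abel] at h2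
      -- instead: N v ≤ N (u+v) + N u
      have h3 := nadd (u + v) (-u)
      rw [nneg, show u + v + -u = v from by abel] at h3
      linarith
    · have h := nadd (x - u) (-x)
      rw [nneg, show x - u + -x = -u from by abel, nneg] at h
      linarith
    · have h := nadd (y - v) (-y)
      rw [nneg, show y - v + -y = -v from by abel, nneg] at h
      linarith
    · have h := nadd (x + y - u - v) (-(x + y - u))
      rw [nneg, show x + y - u - v + -(x + y - u) = -v from by abel, nneg] at h
      have h2 := nadd (x + y) (-u)
      rw [nneg, show x + y + -u = x + y - u from by abel] at h2
      have h3 := nadd x y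
      linarith
    · have h := nadd (x - (u + u)) (-x)
      rw [nneg, show x - (u + u) + -x = -(u + u) from by abel, nneg] at h
      linarith
    · have h := nadd (y - (v + v)) (-y)
      rw [nneg, show y - (v + v) + -y = -(v + v) from by abel, nneg] at h
      linarith
    · have h := nadd (x - y - u + v) (-(x - y - u))
      rw [nneg, show x - y - u + v + -(x - y - u) = v from by abel] at h
      have h2 := nadd (x - y) (-u)
      rw [nneg, show x - y + -u = x - y - u from by abel] at h2
      have h3 := nadd x (-y)
      rw [nneg, show x + -y = x - y from by abel] at h3
      linarith
    · have h := nadd (u - v) (-u)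
      rw [nneg, show u - v + -u = -v from by abel, nneg] at h
      linarith
    · have h := nadd (x + y - ((u + v) + (u + v))) (-(x + y - (u + u)))
      rw [nneg, show x + y - ((u + v) + (u + v)) + -(x + y - (u + u)) = -(v + v) from by abel,
        nneg] at h
      have h2 := nadd (x + y) (-(u + u))
      rw [nneg, show x + y + -(u + u) = x + y - (u + u) from by abel] at h2
      have h3 := nadd x y
      linarith
end
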